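/- arXiv:2310.08942 — 11 statements merged into one kernel-verified Lean document; each statement's English description precedes it below -/
import Mathlib

section
/- Let 0 < q < ∞, let σ, ω : ℕ → (0,∞) be weight sequences, and let v : ℕ → ℝ satisfy sup_{j} σ_j|v_j| < ∞ and ∑_{j} (ω_j|v_j|)^q < ∞. Let n ∈ ℕ and let J_n ⊆ J_{n+1} ⊆ ℕ be finite sets with |J_n| = n and |J_{n+1}| = n+1 such that J_n is a set of indices of the n largest elements of the sequence (σ_j|v_j|)_j and J_{n+1} is a set of indices of the n+1 largest elements of (σ_j|v_j|)_j. Then sup_{j ∉ J_n} σ_j|v_j| ≤ (∑_{k ∈ J_{n+1}} (ω_k/σ_k)^q)^{-1/q} · (∑_{j} (ω_j|v_j|)^q)^{1/q}. (This is the weighted Stechkin lemma in the case p = ∞, where α = σ.) -/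
open scoped BigOperators

/-- Weighted Stechkin lemma, case `p = ∞` (so `α = σ`). -/
theorem weighted_stechkin_p_infty
    (q : ℝ) (hq : 0 < q)
    (σ ω : ℕ → ℝ) (hσ : ∀ j, 0 < σ j) (hω : ∀ j, 0 < ω j)
    (v : ℕ → ℝ)
    (hbdd : BddAbove (Set.range fun j => σ j * |v j|))
    (hsum : Summable fun j => (ω j * |v j|) ^ q)
    (n : ℕ) (J₀ J₁ : Finset ℕ) (hsub : J₀ ⊆ J₁)
    (hcard₀ : J₀.card = n) (hcard₁ : J₁.card = n + 1)
    (hmax₀ : ∀ i ∈ J₀, ∀ j ∉ J₀, σ j * |v j| ≤ σ i * |v i|)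
    (hmax₁ : ∀ i ∈ J₁, ∀ j ∉ J₁, σ j * |v j| ≤ σ i * |v i|) :
    (⨆ j : {j : ℕ // j ∉ J₀}, σ j.1 * |v j.1|) ≤
      (∑ k ∈ J₁, (ω k / σ k) ^ q) ^ (-(1 / q)) *
        (∑' j, (ω j * |v j|) ^ q) ^ (1 / q) := by
  set s := ⨆ j : {j : ℕ // j ∉ J₀}, σ j.1 * |v j.1| with hsdef
  have hbdd' : BddAbove (Set.range fun j : {j : ℕ // j ∉ J₀} => σ j.1 * |v j.1|) := by
    obtain ⟨c, hc⟩ := hbdd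
    exact ⟨c, by rintro x ⟨j, rfl⟩; exact hc ⟨j.1, rfl⟩⟩
  have hne : Nonempty {j : ℕ // j ∉ J₀} := by
    obtain ⟨j, hj⟩ := J₀.exists_notMem
    exact ⟨⟨j, hj⟩⟩
  have hs0 : 0 ≤ s := by
    obtain ⟨j⟩ := hne
    exact le_trans (mul_nonneg (hσ j.1).le (abs_nonneg _)) (le_ciSup hbdd' j)
  have hkey : ∀ k ∈ J₁, s ≤ σ k * |v k| := by
    intro k hk
    apply ciSup_le
    rintro ⟨j, hj⟩
    by_cases hj1 : j ∈ J₁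
    · by_cases hk0 : k ∈ J₀
      · exact hmax₀ k hk0 j hj
      · have hcard : (J₁ \ J₀).card = 1 := by
          rw [Finset.card_sdiff_of_subset hsub, hcard₀, hcard₁]; omega
        obtain ⟨a, ha⟩ := Finset.card_eq_one.mp hcard
        have hja : j = a := by
          have := Finset.mem_sdiff.mpr ⟨hj1, hj⟩
          rw [ha] at this; simpa using this
        have hka : k = a := by
          have := Finset.mem_sdiff.mpr ⟨hk, hk0⟩
          rw [ha] at this; simpa using this
        show σ j * |v j| ≤ σ k * |v k|
        rw [hja, hka]
    · exact hmax₁ k hk j hj1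
  set S := ∑ k ∈ J₁, (ω k / σ k) ^ q with hSdef
  set T := ∑' j, (ω j * |v j|) ^ q with hTdef
  have hJ₁ne : J₁.Nonempty := Finset.card_pos.mp (by omega)
  have hSpos : 0 < S :=
    Finset.sum_pos (fun k _ => Real.rpow_pos_of_pos (div_pos (hω k) (hσ k)) q) hJ₁ne
  have hT0 : 0 ≤ T :=
    tsum_nonneg fun j => Real.rpow_nonneg (mul_nonneg (hω j).le (abs_nonneg _)) q
  have hmain : s ^ q * S ≤ T := by
    calc s ^ q * S = ∑ k ∈ J₁, s ^ q * (ω k / σ k) ^ q := by rw [Finset.mul_sum]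
      _ ≤ ∑ k ∈ J₁, (ω k * |v k|) ^ q := by
          apply Finset.sum_le_sum
          intro k hk
          have h2 : 0 < ω k / σ k := div_pos (hω k) (hσ k)
          rw [← Real.mul_rpow hs0 h2.le]
          apply Real.rpow_le_rpow (mul_nonneg hs0 h2.le) _ hq.le
          have h3 : s * (ω k / σ k) ≤ (σ k * |v k|) * (ω k / σ k) :=
            mul_le_mul_of_nonneg_right (hkey k hk) h2.le
          calc s * (ω k / σ k) ≤ (σ k * |v k|) * (ω k / σ k) := h3
            _ = ω k * |v k| := by field_simp [(hσ k).ne']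
      _ ≤ T := Summable.sum_le_tsum J₁
          (fun j _ => Real.rpow_nonneg (mul_nonneg (hω j).le (abs_nonneg _)) q) hsum
  have hsq : s ^ q ≤ T / S := (le_div_iff₀ hSpos).mpr hmain
  have hfin : (s ^ q) ^ (1/q) ≤ (T / S) ^ (1/q) :=
    Real.rpow_le_rpow (Real.rpow_nonneg hs0 q) hsq (by positivity)
  have hid : (s ^ q) ^ (1/q) = s := by
    rw [← Real.rpow_mul hs0, mul_one_div_cancel hq.ne', Real.rpow_one]
  rw [hid] at hfin
  calc s ≤ (T / S) ^ (1/q) := hfin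
    _ = S ^ (-(1/q)) * T ^ (1/q) := by
        rw [Real.div_rpow hT0 hSpos.le, Real.rpow_neg hSpos.le, div_eq_mul_inv, mul_comm]
end

section
/- Let 0 < q < p < ∞ and set s := 1/q − 1/p. Let σ, ω : ℕ → (0,∞) be weight sequences and define α : ℕ → (0,∞) by α_j := σ_j^{(p−q)/p} · ω_j^{q/p} (so that α^p = σ^{p−q} ω^q). Let v : ℕ → ℝ satisfy sup_j σ_j|v_j| < ∞ and ∑_j (ω_j|v_j|)^q < ∞. Let n ∈ ℕ and let J_n ⊆ J_{n+1} ⊆ ℕ be finite sets with |J_n| = n and |J_{n+1}| = n+1 such that J_n is a set of indices of the n largest elements of the sequence (σ_j|v_j|)_j and J_{n+1} is a set of indices of the n+1 largest elements of (σ_j|v_j|)_j. Then (∑_{j ∉ J_n} (α_j|v_j|)^p)^{1/p} ≤ (∑_{k ∈ J_{n+1}} (ω_k/σ_k)^q)^{-s} · (∑_j (ω_j|v_j|)^q)^{1/q}. (Weighted Stechkin lemma, finite p case.) -/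
open scoped BigOperators

/-- Weighted Stechkin lemma, case of finite `p`, with `α ^ p = σ ^ (p - q) * ω ^ q`. -/
theorem weighted_stechkin_finite_p
    (p q : ℝ) (hq : 0 < q) (hqp : q < p)
    (σ ω : ℕ → ℝ) (hσ : ∀ j, 0 < σ j) (hω : ∀ j, 0 < ω j)
    (α : ℕ → ℝ) (hα : ∀ j, α j = σ j ^ ((p - q) / p) * ω j ^ (q / p))
    (v : ℕ → ℝ)
    (hbdd : BddAbove (Set.range fun j => σ j * |v j|))
    (hsum : Summable fun j => (ω j * |v j|) ^ q)
    (n : ℕ) (J₀ J₁ : Finset ℕ) (hsub : J₀ ⊆ J₁)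
    (hcard₀ : J₀.card = n) (hcard₁ : J₁.card = n + 1)
    (hmax₀ : ∀ i ∈ J₀, ∀ j ∉ J₀, σ j * |v j| ≤ σ i * |v i|)
    (hmax₁ : ∀ i ∈ J₁, ∀ j ∉ J₁, σ j * |v j| ≤ σ i * |v i|) :
    Summable (fun j : {j : ℕ // j ∉ J₀} => (α j.1 * |v j.1|) ^ p) ∧
    (∑' j : {j : ℕ // j ∉ J₀}, (α j.1 * |v j.1|) ^ p) ^ (1 / p) ≤
      (∑ k ∈ J₁, (ω k / σ k) ^ q) ^ (-(1 / q - 1 / p)) *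
        (∑' j, (ω j * |v j|) ^ q) ^ (1 / q) := by
  have hp : 0 < p := hq.trans hqp
  have hpq : 0 < p - q := by linarith
  set t : ℕ → ℝ := fun j => σ j * |v j| with ht
  set w : ℕ → ℝ := fun j => (ω j * |v j|) ^ q with hw
  have htnn : ∀ j, 0 ≤ t j := fun j => mul_nonneg (hσ j).le (abs_nonneg _)
  have hwnn : ∀ j, 0 ≤ w j := fun j =>
    Real.rpow_nonneg (mul_nonneg (hω j).le (abs_nonneg _)) q
  set M : ℝ := ∑' j, (ω j * |v j|) ^ q with hM
  set S : ℝ := ∑ k ∈ J₁, (ω k / σ k) ^ q with hS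
  have hMnn : 0 ≤ M := tsum_nonneg hwnn
  have hSpos : 0 < S := by
    apply Finset.sum_pos
    · intro k hk
      exact Real.rpow_pos_of_pos (div_pos (hω k) (hσ k)) q
    · rw [← Finset.card_pos, hcard₁]; omega
  -- key: for j ∉ J₀, t j ^ q * S ≤ M
  have hkey : ∀ j ∉ J₀, t j ^ q * S ≤ M := by
    intro j hj
    obtain ⟨m, hm⟩ : ∃ m, J₁ \ J₀ = {m} := by
      apply Finset.card_eq_one.mp
      rw [Finset.card_sdiff_of_subset hsub, hcard₀, hcard₁]; omega
    have hcomp : ∀ k ∈ J₁, t j ≤ t k ∨ j = k := by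
      intro k hk
      by_cases hk0 : k ∈ J₀
      · exact Or.inl (hmax₀ k hk0 j hj)
      · have hkm : k = m := by
          have : k ∈ J₁ \ J₀ := Finset.mem_sdiff.mpr ⟨hk, hk0⟩
          rwa [hm, Finset.mem_singleton] at this
        by_cases hj1 : j ∈ J₁
        · have : j ∈ J₁ \ J₀ := Finset.mem_sdiff.mpr ⟨hj1, hj⟩
          rw [hm, Finset.mem_singleton] at this
          exact Or.inr (this.trans hkm.symm)
        · exact Or.inl (hmax₁ k hk j hj1)
    have hterm : ∀ k ∈ J₁, t j ^ q * (ω k / σ k) ^ q ≤ w k := by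
      intro k hk
      have hok : 0 ≤ ω k / σ k := (div_pos (hω k) (hσ k)).le
      have hcollapse : t k * (ω k / σ k) = ω k * |v k| := by
        field_simp [ht, (hσ k).ne']; ring
      rw [← Real.mul_rpow (htnn j) hok]
      rcases hcomp k hk with h | h
      · apply Real.rpow_le_rpow (mul_nonneg (htnn j) hok) _ hq.le
        calc t j * (ω k / σ k) ≤ t k * (ω k / σ k) :=
              mul_le_mul_of_nonneg_right h hok
          _ = ω k * |v k| := hcollapse
      · subst h
        rw [hcollapse]
    calc t j ^ q * S = ∑ k ∈ J₁, t j ^ q * (ω k / σ k) ^ q := by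
          rw [hS, Finset.mul_sum]
      _ ≤ ∑ k ∈ J₁, w k := Finset.sum_le_sum hterm
      _ ≤ M := Summable.sum_le_tsum J₁ (fun k _ => hwnn k) hsum
  set K : ℝ := (M / S) ^ ((p - q) / q) with hK
  have hKnn : 0 ≤ K := Real.rpow_nonneg (div_nonneg hMnn hSpos.le) _
  have hpow : ∀ j ∉ J₀, t j ^ (p - q) ≤ K := by
    intro j hj
    have h1 : t j ^ q ≤ M / S := (le_div_iff₀ hSpos).mpr (hkey j hj)
    have h2 : t j ≤ (M / S) ^ (1 / q) := by
      have h := Real.rpow_le_rpow (Real.rpow_nonneg (htnn j) q) h1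
        (by positivity : (0:ℝ) ≤ 1 / q)
      rwa [← Real.rpow_mul (htnn j), mul_one_div, div_self hq.ne',
        Real.rpow_one] at h
    have h3 := Real.rpow_le_rpow (htnn j) h2 hpq.le
    rwa [← Real.rpow_mul (div_nonneg hMnn hSpos.le), one_div,
      inv_mul_eq_div] at h3
  have hαnn' : ∀ j, 0 ≤ α j := fun j => by
    rw [hα j]
    exact mul_nonneg (Real.rpow_nonneg (hσ j).le _) (Real.rpow_nonneg (hω j).le _)
  -- the per-term identity
  have hterm_eq : ∀ j, (α j * |v j|) ^ p = t j ^ (p - q) * w j := by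
    intro j
    by_cases hv : v j = 0
    · simp [ht, hw, hv, Real.zero_rpow hp.ne', Real.zero_rpow hq.ne',
        Real.zero_rpow hpq.ne']
    · have hva : 0 < |v j| := abs_pos.mpr hv
      rw [Real.mul_rpow (hαnn' j) hva.le, hα j,
        Real.mul_rpow (Real.rpow_nonneg (hσ j).le _) (Real.rpow_nonneg (hω j).le _),
        ← Real.rpow_mul (hσ j).le, ← Real.rpow_mul (hω j).le,
        div_mul_cancel₀ _ hp.ne', div_mul_cancel₀ _ hp.ne']
      have hvp : |v j| ^ p = |v j| ^ (p - q) * |v j| ^ q := by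
        rw [← Real.rpow_add hva]; ring_nf
      rw [hvp]
      show _ = (σ j * |v j|) ^ (p - q) * (ω j * |v j|) ^ q
      rw [Real.mul_rpow (hσ j).le hva.le, Real.mul_rpow (hω j).le hva.le]
      ring
  -- summability
  have hwsub : Summable (fun j : {j : ℕ // j ∉ J₀} => w j.1) := hsum.subtype _
  have hle : ∀ j : {j : ℕ // j ∉ J₀}, (α j.1 * |v j.1|) ^ p ≤ K * w j.1 := by
    intro j
    rw [hterm_eq j.1]
    exact mul_le_mul_of_nonneg_right (hpow j.1 j.2) (hwnn j.1)
  have hsummable : Summable (fun j : {j : ℕ // j ∉ J₀} => (α j.1 * |v j.1|) ^ p) := by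
    apply Summable.of_nonneg_of_le
      (fun j => Real.rpow_nonneg (mul_nonneg (hαnn' j.1) (abs_nonneg _)) p)
      hle (hwsub.mul_left K)
  refine ⟨hsummable, ?_⟩
  have htsum_le : (∑' j : {j : ℕ // j ∉ J₀}, (α j.1 * |v j.1|) ^ p) ≤ K * M := by
    calc (∑' j : {j : ℕ // j ∉ J₀}, (α j.1 * |v j.1|) ^ p)
        ≤ ∑' j : {j : ℕ // j ∉ J₀}, K * w j.1 :=
          Summable.tsum_le_tsum hle hsummable (hwsub.mul_left K)
      _ = K * ∑' j : {j : ℕ // j ∉ J₀}, w j.1 := tsum_mul_left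
      _ ≤ K * M := by
          apply mul_le_mul_of_nonneg_left _ hKnn
          exact Summable.tsum_subtype_le w _ hwnn hsum
  have hfinal : (K * M) ^ (1 / p) = S ^ (-(1 / q - 1 / p)) * M ^ (1 / q) := by
    rcases eq_or_lt_of_le hMnn with hM0 | hMpos
    · have hK0 : K = 0 := by
        rw [hK, ← hM0, zero_div, Real.zero_rpow (by positivity)]
      rw [hK0, zero_mul, ← hM0, Real.zero_rpow (by positivity),
        Real.zero_rpow (by positivity), mul_zero]
    · have hKpos : 0 < K := Real.rpow_pos_of_pos (div_pos hMpos hSpos) _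
      have hL : (K * M) ^ (1 / p) =
          Real.exp ((Real.log M - Real.log S) * ((p - q) / q) * (1 / p)
            + Real.log M * (1 / p)) := by
        rw [Real.rpow_def_of_pos (by positivity),
          Real.log_mul hKpos.ne' hMpos.ne', hK,
          Real.log_rpow (div_pos hMpos hSpos),
          Real.log_div hMpos.ne' hSpos.ne']
        ring_nf
      have hR : S ^ (-(1 / q - 1 / p)) * M ^ (1 / q) =
          Real.exp (Real.log S * (-(1 / q - 1 / p)) + Real.log M * (1 / q)) := by
        rw [Real.rpow_def_of_pos hSpos, Real.rpow_def_of_pos hMpos, Real.exp_add]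
      rw [hL, hR]
      congr 1
      field_simp
      ring
  calc (∑' j : {j : ℕ // j ∉ J₀}, (α j.1 * |v j.1|) ^ p) ^ (1 / p)
      ≤ (K * M) ^ (1 / p) := Real.rpow_le_rpow (tsum_nonneg fun j =>
          Real.rpow_nonneg (mul_nonneg (hαnn' j.1) (abs_nonneg _)) p)
          htsum_le (by positivity)
    _ = S ^ (-(1 / q - 1 / p)) * M ^ (1 / q) := hfinal
end

section
/- Let τ : ℕ → (0,∞), let 0 < q < p ≤ 2, and set s := 1/q − 1/p. Define α_j := τ_j^{(2−p)/p} and ω_j := τ_j^{(2−q)/q}. Let v : ℕ → ℝ satisfy sup_j τ_j^{-1}|v_j| < ∞ and ∑_j (ω_j|v_j|)^q < ∞. Then for every r > 0 there exists a finite set J ⊆ ℕ with ∑_{j∈J} τ_j² ≤ r such that (∑_{j ∉ J} (α_j|v_j|)^p)^{1/p} ≤ r^{-s} · (∑_j (ω_j|v_j|)^q)^{1/q}. In particular, the weighted r-sparse approximation error σ_r(v)_{ℓ^p_α} := inf{ ‖v − P_J v‖_{ℓ^p_α} : J ⊆ ℕ finite, ∑_{j∈J} τ_j² ≤ r } satisfies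 σ_r(v)_{ℓ^p_α} ≤ r^{-s} ‖v‖_{ℓ^q_ω}. -/
open scoped BigOperators

private lemma pow_id_aux {t : ℝ} (ht : 0 < t) {x : ℝ} (hx : 0 ≤ x) {c : ℝ} (hc : 0 < c) :
    (t ^ ((2 - c) / c) * x) ^ c = t ^ 2 * (t⁻¹ * x) ^ c := by
  have h2 : (t:ℝ) ^ 2 = t ^ (2:ℝ) := by
    rw [← Real.rpow_natCast t 2]; norm_num
  rw [Real.mul_rpow (Real.rpow_nonneg ht.le _) hx, ← Real.rpow_mul ht.le,
      div_mul_cancel₀ _ hc.ne',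
      Real.mul_rpow (inv_nonneg.mpr ht.le) hx, Real.inv_rpow ht.le,
      ← Real.rpow_neg ht.le, h2, ← mul_assoc, ← Real.rpow_add ht, ← sub_eq_add_neg]

/-- Weighted `r`-sparse approximation error bound: for every `r > 0` there is a
finite index set `J` of `τ`-weighted cardinality at most `r` such that the
`ℓ^p_α`-norm of the tail is at most `r ^ (-s) * ‖v‖_{ℓ^q_ω}`, where
`α = τ ^ ((2-p)/p)` and `ω = τ ^ ((2-q)/q)` and `s = 1/q - 1/p`. -/
theorem weighted_r_sparse_approx
    (τ : ℕ → ℝ) (hτ : ∀ j, 0 < τ j)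
    (p q : ℝ) (hq : 0 < q) (hqp : q < p) (hp2 : p ≤ 2)
    (v : ℕ → ℝ)
    (hbdd : BddAbove (Set.range fun j => (τ j)⁻¹ * |v j|))
    (hsum : Summable fun j => (τ j ^ ((2 - q) / q) * |v j|) ^ q)
    (r : ℝ) (hr : 0 < r) :
    ∃ J : Finset ℕ,
      (∑ j ∈ J, τ j ^ 2) ≤ r ∧
      Summable (fun j : {j : ℕ // j ∉ J} => (τ j.1 ^ ((2 - p) / p) * |v j.1|) ^ p) ∧
      (∑' j : {j : ℕ // j ∉ J}, (τ j.1 ^ ((2 - p) / p) * |v j.1|) ^ p) ^ (1 / p) ≤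
        r ^ (-(1 / q - 1 / p)) *
          (∑' j, (τ j ^ ((2 - q) / q) * |v j|) ^ q) ^ (1 / q) := by
  classical
  have hp : 0 < p := hq.trans hqp
  have hpq : (0:ℝ) ≤ p - q := by linarith
  set u : ℕ → ℝ := fun j => (τ j)⁻¹ * |v j| with hu_def
  have hu0 : ∀ j, 0 ≤ u j := fun j => mul_nonneg (inv_nonneg.mpr (hτ j).le) (abs_nonneg _)
  set g : ℕ → ℝ := fun j => τ j ^ 2 * u j ^ q with hg_def
  set f : ℕ → ℝ := fun j => τ j ^ 2 * u j ^ p with hf_def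
  have hg0 : ∀ j, 0 ≤ g j := fun j => mul_nonneg (by positivity) (Real.rpow_nonneg (hu0 j) q)
  have hf0 : ∀ j, 0 ≤ f j := fun j => mul_nonneg (by positivity) (Real.rpow_nonneg (hu0 j) p)
  have hgid : (fun j => (τ j ^ ((2 - q) / q) * |v j|) ^ q) = g :=
    funext fun j => pow_id_aux (hτ j) (abs_nonneg _) hq
  have hfid : (fun j : ℕ => (τ j ^ ((2 - p) / p) * |v j|) ^ p) = f :=
    funext fun j => pow_id_aux (hτ j) (abs_nonneg _) hp
  have hg : Summable g := hgid ▸ hsum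
  obtain ⟨M, hM⟩ : ∃ M, ∀ j, u j ≤ M := ⟨_, fun j => le_csSup hbdd ⟨j, rfl⟩⟩
  have hM0 : 0 ≤ M := le_trans (hu0 0) (hM 0)
  have hup : ∀ j, u j ^ p ≤ M ^ (p - q) * u j ^ q := by
    intro j
    rcases eq_or_lt_of_le (hu0 j) with h0 | h0
    · rw [← h0, Real.zero_rpow hp.ne', Real.zero_rpow hq.ne', mul_zero]
    · have he : u j ^ p = u j ^ (p - q) * u j ^ q := by
        rw [← Real.rpow_add h0]; ring_nf
      rw [he]
      exact mul_le_mul_of_nonneg_right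
        (Real.rpow_le_rpow (hu0 j) (hM j) hpq) (Real.rpow_nonneg (hu0 j) q)
  have hf : Summable f := by
    apply Summable.of_nonneg_of_le hf0 (fun j => ?_) (hg.mul_left (M ^ (p - q)))
    calc f j ≤ τ j ^ 2 * (M ^ (p - q) * u j ^ q) :=
          mul_le_mul_of_nonneg_left (hup j) (by positivity)
      _ = M ^ (p - q) * g j := by rw [hg_def]; ring
  set A2 := ∑' j, g j with hA2_def
  have hA2nn : 0 ≤ A2 := tsum_nonneg hg0
  have hRHSnn : 0 ≤ r ^ (-(1 / q - 1 / p)) *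
      (∑' j, (τ j ^ ((2 - q) / q) * |v j|) ^ q) ^ (1 / q) :=
    mul_nonneg (Real.rpow_nonneg hr.le _) (Real.rpow_nonneg (tsum_nonneg fun j =>
      Real.rpow_nonneg (mul_nonneg (Real.rpow_nonneg (hτ j).le _) (abs_nonneg _)) q) _)
  rcases eq_or_lt_of_le hA2nn with hA2 | hA2
  · -- degenerate case : v = 0
    have hv0 : ∀ j, |v j| = 0 := by
      intro j
      have h1 : g j ≤ 0 := hA2 ▸ Summable.le_tsum hg j (fun i _ => hg0 i)
      have h2 : g j = 0 := le_antisymm h1 (hg0 j)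
      have h3 : u j ^ q = 0 := by
        rcases mul_eq_zero.mp h2 with h | h
        · exact absurd h (pow_pos (hτ j) 2).ne'
        · exact h
      have h4 : u j = 0 := by
        by_contra hne
        have hlt : 0 < u j := lt_of_le_of_ne (hu0 j) (Ne.symm hne)
        exact absurd h3 (ne_of_gt (Real.rpow_pos_of_pos hlt q))
      have h5 : (τ j)⁻¹ * |v j| = 0 := h4
      rcases mul_eq_zero.mp h5 with h | h
      · exact absurd h (inv_ne_zero (hτ j).ne')
      · exact h
    have hzero : (fun j : {j : ℕ // j ∉ (∅:Finset ℕ)} =>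
        (τ j.1 ^ ((2 - p) / p) * |v j.1|) ^ p) = fun _ => 0 := by
      funext j; rw [hv0, mul_zero, Real.zero_rpow hp.ne']
    refine ⟨∅, by simpa using hr.le, ?_, ?_⟩
    · rw [hzero]; exact summable_zero
    · rw [hzero, tsum_zero, Real.zero_rpow (by positivity : (1:ℝ)/p ≠ 0)]
      exact hRHSnn
  · -- main case
    set t := A2 ^ (1/q) * r ^ (-(1/q)) with ht_def
    have ht : 0 < t := mul_pos (Real.rpow_pos_of_pos hA2 _) (Real.rpow_pos_of_pos hr _)
    have htq : t ^ q = A2 * r⁻¹ := by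
      rw [ht_def, Real.mul_rpow (Real.rpow_nonneg hA2nn _) (Real.rpow_nonneg hr.le _),
          ← Real.rpow_mul hA2nn, ← Real.rpow_mul hr.le, neg_mul,
          one_div_mul_cancel hq.ne', Real.rpow_one, Real.rpow_neg_one]
    set μS : ℕ → ℝ := fun j => if t < u j then τ j ^ 2 else 0 with hμS_def
    set gS : ℕ → ℝ := fun j => if t < u j then g j else 0 with hgS_def
    set gC : ℕ → ℝ := fun j => if t < u j then 0 else g j with hgC_def
    set fS : ℕ → ℝ := fun j => if t < u j then f j else 0 with hfS_def
    have hμS0 : ∀ j, 0 ≤ μS j := fun j => by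
      rw [hμS_def]; dsimp only; split <;> positivity
    have hgS0 : ∀ j, 0 ≤ gS j := fun j => by
      rw [hgS_def]; dsimp only; split; exacts [hg0 j, le_refl 0]
    have hgC0 : ∀ j, 0 ≤ gC j := fun j => by
      rw [hgC_def]; dsimp only; split; exacts [le_refl 0, hg0 j]
    have hfS0 : ∀ j, 0 ≤ fS j := fun j => by
      rw [hfS_def]; dsimp only; split; exacts [hf0 j, le_refl 0]
    have hgSle : ∀ j, gS j ≤ g j := fun j => by
      rw [hgS_def]; dsimp only; split; exacts [le_refl _, hg0 j]
    have hgCle : ∀ j, gC j ≤ g j := fun j => by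
      rw [hgC_def]; dsimp only; split; exacts [hg0 j, le_refl _]
    have hfSle : ∀ j, fS j ≤ f j := fun j => by
      rw [hfS_def]; dsimp only; split; exacts [le_refl _, hf0 j]
    have hgSsum : Summable gS := Summable.of_nonneg_of_le hgS0 hgSle hg
    have hgCsum : Summable gC := Summable.of_nonneg_of_le hgC0 hgCle hg
    have hfSsum : Summable fS := Summable.of_nonneg_of_le hfS0 hfSle hf
    -- Chebyshev
    have hcheb : ∀ j, μS j ≤ A2⁻¹ * r * g j := by
      intro j
      rw [hμS_def]; dsimp only
      split
      · next h =>
        have h1 : t ^ q ≤ u j ^ q := Real.rpow_le_rpow ht.le h.le hq.le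
        have h2 : τ j ^ 2 * (A2 * r⁻¹) ≤ g j := by
          rw [← htq, hg_def]
          exact mul_le_mul_of_nonneg_left h1 (by positivity)
        have h3 : τ j ^ 2 = (A2⁻¹ * r) * (τ j ^ 2 * (A2 * r⁻¹)) := by
          field_simp
        rw [h3]
        exact mul_le_mul_of_nonneg_left h2 (by positivity)
      · exact mul_nonneg (by positivity) (hg0 j)
    have hμSsum : Summable μS :=
      Summable.of_nonneg_of_le hμS0 hcheb (hg.mul_left _)
    have hμStsum : (∑' j, μS j) ≤ r := by
      calc (∑' j, μS j) ≤ ∑' j, A2⁻¹ * r * g j := Summable.tsum_le_tsum hcheb hμSsum (hg.mul_left _)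
        _ = A2⁻¹ * r * A2 := by rw [tsum_mul_left]
        _ = r := by field_simp
    set GS := ∑' j, gS j with hGS_def
    have hGSnn : 0 ≤ GS := tsum_nonneg hgS0
    obtain ⟨n, hn⟩ : ∃ n, (∑' j, fS j) - ∑ j ∈ Finset.range n, fS j ≤ t ^ (p - q) * GS := by
      by_cases hS : ∃ j, t < u j
      · obtain ⟨j₀, hj₀⟩ := hS
        have hGS : 0 < GS := by
          have h1 : gS j₀ ≤ GS := Summable.le_tsum hgSsum j₀ (fun i _ => hgS0 i)
          have h2 : gS j₀ = g j₀ := by rw [hgS_def]; exact if_pos hj₀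
          have h3 : 0 < g j₀ :=
            mul_pos (pow_pos (hτ j₀) 2) (Real.rpow_pos_of_pos (ht.trans hj₀) q)
          linarith [h2 ▸ h1]
        have hε : 0 < t ^ (p - q) * GS := mul_pos (Real.rpow_pos_of_pos ht _) hGS
        have htend := hfSsum.hasSum.tendsto_sum_nat
        rw [Metric.tendsto_atTop] at htend
        obtain ⟨N, hN⟩ := htend _ hε
        refine ⟨N, ?_⟩
        have hd := hN N le_rfl
        rw [Real.dist_eq, abs_lt] at hd
        linarith [hd.1]
      · push_neg at hS
        refine ⟨0, ?_⟩
        have hz : fS = fun _ => 0 := by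
          funext j; rw [hfS_def]; exact if_neg (not_lt.mpr (hS j))
        rw [hz]
        simp only [tsum_zero, Finset.sum_const_zero, sub_zero]
        exact mul_nonneg (Real.rpow_nonneg ht.le _) hGSnn
    set J : Finset ℕ := (Finset.range n).filter (fun j => t < u j) with hJ_def
    -- cardinality bound
    have hJ1 : (∑ j ∈ J, τ j ^ 2) ≤ r := by
      have h1 : (∑ j ∈ J, τ j ^ 2) = ∑ j ∈ J, μS j := by
        refine Finset.sum_congr rfl (fun j hj => ?_)
        rw [hμS_def]
        exact (if_pos ((Finset.mem_filter.mp hj).2)).symm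
      rw [h1]
      exact le_trans (Summable.sum_le_tsum J (fun j _ => hμS0 j) hμSsum) hμStsum
    -- summability of tail
    have hrw : (fun j : {j : ℕ // j ∉ J} => (τ j.1 ^ ((2 - p) / p) * |v j.1|) ^ p)
        = fun j : {j : ℕ // j ∉ J} => f j.1 := funext fun j => congrFun hfid j.1
    have hsub : Summable (fun j : {j : ℕ // j ∉ J} => f j.1) := hf.subtype {j | j ∉ J}
    -- key estimate
    set fT : ℕ → ℝ := fun j => if t < u j ∧ j ∉ Finset.range n then f j else 0 with hfT_def
    have hfT0 : ∀ j, 0 ≤ fT j := fun j => by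
      rw [hfT_def]; dsimp only; split; exacts [hf0 j, le_refl 0]
    have hfTle : ∀ j, fT j ≤ f j := fun j => by
      rw [hfT_def]; dsimp only; split; exacts [le_refl _, hf0 j]
    have hfTsum : Summable fT := Summable.of_nonneg_of_le hfT0 hfTle hf
    have hfSeq : ∀ j, t < u j → fS j = f j := fun j h => by
      simp only [hfS_def]; exact if_pos h
    have hfSeq0 : ∀ j, ¬ t < u j → fS j = 0 := fun j h => by
      simp only [hfS_def]; exact if_neg h
    have hind : ∀ j, fT j = fS j - (if j ∈ Finset.range n then fS j else 0) := by
      intro j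
      simp only [hfT_def]
      by_cases h1 : t < u j
      · by_cases h2 : j ∈ Finset.range n
        · rw [if_neg (fun hc => hc.2 h2), if_pos h2, sub_self]
        · rw [if_pos ⟨h1, h2⟩, if_neg h2, hfSeq j h1, sub_zero]
      · rw [if_neg (fun hc => h1 hc.1), hfSeq0 j h1]
        by_cases h2 : j ∈ Finset.range n
        · rw [if_pos h2, sub_self]
        · rw [if_neg h2, sub_zero]
    have hfinsum : Summable (fun j => if j ∈ Finset.range n then fS j else 0) :=
      summable_of_ne_finset_zero (s := Finset.range n) (fun j hj => if_neg hj)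
    have hfTtsum : (∑' j, fT j) ≤ t ^ (p - q) * GS := by
      have h1 : (∑' j, fT j) = (∑' j, fS j) - ∑' j, (if j ∈ Finset.range n then fS j else 0) := by
        rw [← Summable.tsum_sub hfSsum hfinsum]
        exact tsum_congr hind
      have h2 : (∑' j, (if j ∈ Finset.range n then fS j else 0)) = ∑ j ∈ Finset.range n, fS j := by
        rw [tsum_eq_sum (s := Finset.range n) (fun j hj => if_neg hj)]
        exact Finset.sum_congr rfl (fun j hj => if_pos hj)
      rw [h1, h2]
      exact hn
    have hgsplit : (∑' j, gC j) + GS = A2 := by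
      rw [hGS_def, hA2_def, ← Summable.tsum_add hgCsum hgSsum]
      refine tsum_congr (fun j => ?_)
      rw [hgC_def, hgS_def]; dsimp only
      by_cases h : t < u j
      · rw [if_pos h, if_pos h, zero_add]
      · rw [if_neg h, if_neg h, add_zero]
    have hkey : (∑' j : {j : ℕ // j ∉ J}, f j.1) ≤ t ^ (p - q) * A2 := by
      have heq : (∑' j : {j : ℕ // j ∉ J}, f j.1) = ∑' j, Set.indicator {j | j ∉ J} f j :=
        tsum_subtype {j | j ∉ J} f
      rw [heq]
      have hbound : ∀ j, Set.indicator {j | j ∉ J} f j ≤ t ^ (p - q) * gC j + fT j := by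
        intro j
        by_cases hjJ : j ∈ J
        · rw [Set.indicator_of_notMem (by simpa using hjJ)]
          exact add_nonneg (mul_nonneg (Real.rpow_nonneg ht.le _) (hgC0 j)) (hfT0 j)
        · rw [Set.indicator_of_mem (by simpa using hjJ)]
          by_cases hju : t < u j
          · have hjr : j ∉ Finset.range n := fun hc =>
              hjJ (Finset.mem_filter.mpr ⟨hc, hju⟩)
            have e1 : gC j = 0 := by simp only [hgC_def]; exact if_pos hju
            have e2 : fT j = f j := by simp only [hfT_def]; exact if_pos ⟨hju, hjr⟩
            rw [e1, e2, mul_zero, zero_add]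
          · have hujt : u j ≤ t := not_lt.mp hju
            have e1 : gC j = g j := by simp only [hgC_def]; exact if_neg hju
            have e2 : fT j = 0 := by simp only [hfT_def]; exact if_neg (by tauto)
            rw [e1, e2, add_zero]
            show τ j ^ 2 * u j ^ p ≤ t ^ (p - q) * (τ j ^ 2 * u j ^ q)
            have hb : u j ^ p ≤ t ^ (p - q) * u j ^ q := by
              rcases eq_or_lt_of_le (hu0 j) with h0 | h0
              · rw [← h0, Real.zero_rpow hp.ne', Real.zero_rpow hq.ne', mul_zero]
              · have he : u j ^ p = u j ^ (p - q) * u j ^ q := by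
                  rw [← Real.rpow_add h0]; ring_nf
                rw [he]
                exact mul_le_mul_of_nonneg_right
                  (Real.rpow_le_rpow (hu0 j) hujt hpq) (Real.rpow_nonneg (hu0 j) q)
            calc τ j ^ 2 * u j ^ p ≤ τ j ^ 2 * (t ^ (p - q) * u j ^ q) :=
                  mul_le_mul_of_nonneg_left hb (by positivity)
              _ = t ^ (p - q) * (τ j ^ 2 * u j ^ q) := by ring
      calc (∑' j, Set.indicator {j | j ∉ J} f j)
          ≤ ∑' j, (t ^ (p - q) * gC j + fT j) :=
            Summable.tsum_le_tsum hbound (hf.indicator _) (((hgCsum.mul_left _).add hfTsum))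
        _ = t ^ (p - q) * (∑' j, gC j) + ∑' j, fT j := by
            rw [Summable.tsum_add (hgCsum.mul_left _) hfTsum, tsum_mul_left]
        _ ≤ t ^ (p - q) * (∑' j, gC j) + t ^ (p - q) * GS := by linarith [hfTtsum]
        _ = t ^ (p - q) * A2 := by rw [← mul_add, hgsplit]
    -- conclude
    refine ⟨J, hJ1, by rw [hrw]; exact hsub, ?_⟩
    rw [hrw, hgid, ← hA2_def]
    have h1 : (∑' j : {j : ℕ // j ∉ J}, f j.1) ^ (1/p) ≤ (t ^ (p - q) * A2) ^ (1/p) :=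
      Real.rpow_le_rpow (tsum_nonneg fun j => hf0 j.1) hkey (by positivity)
    refine le_trans h1 (le_of_eq ?_)
    have hL : 0 < t ^ (p - q) * A2 := mul_pos (Real.rpow_pos_of_pos ht _) hA2
    have hR : 0 < r ^ (-(1/q - 1/p)) * A2 ^ (1/q) :=
      mul_pos (Real.rpow_pos_of_pos hr _) (Real.rpow_pos_of_pos hA2 _)
    have hlogt : Real.log t = 1/q * Real.log A2 + -(1/q) * Real.log r := by
      rw [ht_def, Real.log_mul (Real.rpow_pos_of_pos hA2 _).ne' (Real.rpow_pos_of_pos hr _).ne',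
          Real.log_rpow hA2, Real.log_rpow hr]
    have hlog : Real.log ((t ^ (p - q) * A2) ^ (1/p))
        = Real.log (r ^ (-(1/q - 1/p)) * A2 ^ (1/q)) := by
      rw [Real.log_rpow hL, Real.log_mul (Real.rpow_pos_of_pos ht _).ne' hA2.ne',
          Real.log_rpow ht,
          Real.log_mul (Real.rpow_pos_of_pos hr _).ne' (Real.rpow_pos_of_pos hA2 _).ne',
          Real.log_rpow hr, Real.log_rpow hA2, hlogt]
      field_simp
      ring
    exact Real.log_injOn_pos (Set.mem_Ioi.mpr (Real.rpow_pos_of_pos hL _))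
      (Set.mem_Ioi.mpr hR) hlog
end

section
/- Let 0 < p, q < ∞, let ω : ℕ → (0,∞) be a weight sequence, and define κ_k := (k+1)^{-1/p} for k ∈ ℕ. For v : ℕ → ℝ write v^{mon}_j := sup_{k ≥ j} |v_k| for its minimal monotone majorant and ‖v‖_{ℓ^{p,mon}} := (∑_j (v^{mon}_j)^p)^{1/p}. Then: (i) for every v : ℕ → ℝ with ∑_j (ω_j|v_j|)^q < ∞, one has v^{mon}_k ≤ (ω^{-1})^{mon}_k · ‖v‖_{ℓ^q_ω} for all k, and consequently ‖v‖_{ℓ^{p,mon}} ≤ ‖(ω^{-1})^{mon}‖_{ℓ^p} · ‖v‖_{ℓ^q_ω}; (ii) for every v : ℕ → ℝ with ‖v‖_{ℓ^{p,mon}} < ∞, one has |v_k| ≤ κ_k ‖v‖_{ℓ^{p,mon}} for all k, and consequently ‖v‖_{ℓ^q_ω} ≤ ‖κ‖_{ℓ^q_ω} · ‖v‖_{ℓ^{p,mon}}. -/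
open scoped BigOperators ENNReal

/-- The minimal monotone majorant `v^mon_j = sup_{k ≥ j} |v_k|`, valued in `ℝ≥0∞`. -/
noncomputable def monMaj (v : ℕ → ℝ) (j : ℕ) : ℝ≥0∞ :=
  ⨆ k ∈ Set.Ici j, ENNReal.ofReal |v k|

lemma le_monMaj (v : ℕ → ℝ) {k j : ℕ} (h : k ≤ j) :
    ENNReal.ofReal |v j| ≤ monMaj v k :=
  le_iSup₂ (f := fun i (_ : i ∈ Set.Ici k) => ENNReal.ofReal |v i|) j h

lemma aux_sum_bound {f g : ℕ → ℝ≥0∞} {C : ℝ≥0∞} {r : ℝ} (hr : 0 < r)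
    (h : ∀ k, f k ≤ g k * C) :
    (∑' j, f j ^ r) ^ (1 / r) ≤ (∑' j, g j ^ r) ^ (1 / r) * C := by
  calc (∑' j, f j ^ r) ^ (1 / r)
      ≤ (∑' j, (g j * C) ^ r) ^ (1 / r) :=
        ENNReal.rpow_le_rpow
          (ENNReal.tsum_le_tsum fun j => ENNReal.rpow_le_rpow (h j) hr.le)
          (by positivity)
    _ = ((∑' j, g j ^ r) * C ^ r) ^ (1 / r) := by
        simp_rw [ENNReal.mul_rpow_of_nonneg _ _ hr.le, ENNReal.tsum_mul_right]
    _ = (∑' j, g j ^ r) ^ (1 / r) * (C ^ r) ^ (1 / r) :=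
        ENNReal.mul_rpow_of_nonneg _ _ (by positivity)
    _ = (∑' j, g j ^ r) ^ (1 / r) * C := by
        rw [← ENNReal.rpow_mul, mul_one_div_cancel hr.ne', ENNReal.rpow_one]

/-- Relations between the weighted spaces `ℓ^q_ω` and the monotone spaces `ℓ^{p,mon}`:
(i) every `v ∈ ℓ^q_ω` satisfies `v^mon ≤ (ω⁻¹)^mon ⋅ ‖v‖_{ℓ^q_ω}` pointwise and
`‖v‖_{ℓ^{p,mon}} ≤ ‖(ω⁻¹)^mon‖_{ℓ^p} ⋅ ‖v‖_{ℓ^q_ω}`;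
(ii) every `v ∈ ℓ^{p,mon}` satisfies `|v_k| ≤ κ_k ‖v‖_{ℓ^{p,mon}}` with
`κ_k = (k+1)^{-1/p}` and `‖v‖_{ℓ^q_ω} ≤ ‖κ‖_{ℓ^q_ω} ⋅ ‖v‖_{ℓ^{p,mon}}`. -/
theorem lqmon_wlp
    (p q : ℝ) (hp : 0 < p) (hq : 0 < q)
    (ω : ℕ → ℝ) (hω : ∀ j, 0 < ω j)
    (κ : ℕ → ℝ) (hκ : ∀ k, κ k = ((k : ℝ) + 1) ^ (-(1 / p))) :
    (∀ v : ℕ → ℝ, Summable (fun j => (ω j * |v j|) ^ q) →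
      ((∀ k, monMaj v k ≤
          monMaj (fun j => (ω j)⁻¹) k *
            ENNReal.ofReal ((∑' j, (ω j * |v j|) ^ q) ^ (1 / q))) ∧
        (∑' j, monMaj v j ^ p) ^ (1 / p) ≤
          (∑' j, monMaj (fun i => (ω i)⁻¹) j ^ p) ^ (1 / p) *
            ENNReal.ofReal ((∑' j, (ω j * |v j|) ^ q) ^ (1 / q)))) ∧
    (∀ v : ℕ → ℝ, (∑' j, monMaj v j ^ p) ≠ ⊤ →
      ((∀ k, ENNReal.ofReal |v k| ≤
          ENNReal.ofReal (κ k) * (∑' j, monMaj v j ^ p) ^ (1 / p)) ∧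
        (∑' j, ENNReal.ofReal ((ω j * |v j|) ^ q)) ^ (1 / q) ≤
          (∑' j, ENNReal.ofReal ((ω j * κ j) ^ q)) ^ (1 / q) *
            (∑' j, monMaj v j ^ p) ^ (1 / p))) := by
  constructor
  · intro v hv
    set N : ℝ := (∑' j, (ω j * |v j|) ^ q) ^ (1 / q) with hN
    have hNnn : 0 ≤ N := by
      apply Real.rpow_nonneg
      exact tsum_nonneg fun j =>
        Real.rpow_nonneg (mul_nonneg (hω j).le (abs_nonneg _)) _
    have key : ∀ j, ω j * |v j| ≤ N := by
      intro j
      have h1 : (ω j * |v j|) ^ q ≤ ∑' i, (ω i * |v i|) ^ q :=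
        Summable.le_tsum hv j fun i _ => Real.rpow_nonneg (mul_nonneg (hω i).le (abs_nonneg _)) _
      have h2 : ((ω j * |v j|) ^ q) ^ (1 / q) ≤ N :=
        Real.rpow_le_rpow
          (Real.rpow_nonneg (mul_nonneg (hω j).le (abs_nonneg _)) _) h1
          (by positivity)
      rwa [← Real.rpow_mul (mul_nonneg (hω j).le (abs_nonneg _)),
        mul_one_div_cancel hq.ne',
        Real.rpow_one] at h2
    have pt : ∀ k, monMaj v k ≤
        monMaj (fun j => (ω j)⁻¹) k * ENNReal.ofReal N := by
      intro k
      apply iSup₂_le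
      intro j hj
      have h3 : |v j| ≤ (ω j)⁻¹ * N := by
        calc |v j| = (ω j)⁻¹ * (ω j * |v j|) := by
              rw [inv_mul_cancel_left₀ (hω j).ne']
          _ ≤ (ω j)⁻¹ * N :=
              mul_le_mul_of_nonneg_left (key j) (inv_nonneg.mpr (hω j).le)
      calc ENNReal.ofReal |v j| ≤ ENNReal.ofReal ((ω j)⁻¹ * N) :=
            ENNReal.ofReal_le_ofReal h3
        _ = ENNReal.ofReal |(ω j)⁻¹| * ENNReal.ofReal N := by
            rw [ENNReal.ofReal_mul (inv_nonneg.mpr (hω j).le),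
              abs_of_pos (inv_pos.mpr (hω j))]
        _ ≤ monMaj (fun j => (ω j)⁻¹) k * ENNReal.ofReal N :=
            mul_le_mul_left (le_monMaj _ hj) _
    exact ⟨pt, aux_sum_bound hp pt⟩
  · intro v hS
    set S : ℝ≥0∞ := ∑' j, monMaj v j ^ p with hSdef
    have pt : ∀ k, ENNReal.ofReal |v k| ≤ ENNReal.ofReal (κ k) * S ^ (1 / p) := by
      intro k
      set a : ℝ≥0∞ := ENNReal.ofReal |v k| with ha
      have hk1 : ((k : ℝ≥0∞) + 1) * a ^ p ≤ S := by
        have h1 : ∀ j ∈ Finset.range (k + 1), a ^ p ≤ monMaj v j ^ p := by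
          intro j hj
          exact ENNReal.rpow_le_rpow
            (le_monMaj v (Nat.le_of_lt_succ (Finset.mem_range.mp hj))) hp.le
        calc ((k : ℝ≥0∞) + 1) * a ^ p
            = ∑ j ∈ Finset.range (k + 1), a ^ p := by
              rw [Finset.sum_const, Finset.card_range, nsmul_eq_mul]
              push_cast; ring
          _ ≤ ∑ j ∈ Finset.range (k + 1), monMaj v j ^ p :=
              Finset.sum_le_sum h1
          _ ≤ S := ENNReal.sum_le_tsum _
      have hc0 : ((k : ℝ≥0∞) + 1) ≠ 0 := by simp
      have hct : ((k : ℝ≥0∞) + 1) ≠ ⊤ := by simp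
      have h2 : a ^ p ≤ ((k : ℝ≥0∞) + 1)⁻¹ * S := by
        calc a ^ p = ((k : ℝ≥0∞) + 1)⁻¹ * (((k : ℝ≥0∞) + 1) * a ^ p) := by
              rw [← mul_assoc, ENNReal.inv_mul_cancel hc0 hct, one_mul]
          _ ≤ ((k : ℝ≥0∞) + 1)⁻¹ * S := mul_le_mul_right hk1 _
      have h3 : a ≤ (((k : ℝ≥0∞) + 1)⁻¹ * S) ^ (1 / p) := by
        have := ENNReal.rpow_le_rpow h2 (by positivity : (0:ℝ) ≤ 1 / p)
        rwa [← ENNReal.rpow_mul, mul_one_div_cancel hp.ne', ENNReal.rpow_one] at this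
      have h4 : ENNReal.ofReal (κ k) = ((k : ℝ≥0∞) + 1) ^ (-(1 / p)) := by
        rw [hκ, ← ENNReal.ofReal_rpow_of_pos (by positivity)]
        congr 1
        rw [ENNReal.ofReal_add (by positivity) zero_le_one]
        simp
      calc a ≤ (((k : ℝ≥0∞) + 1)⁻¹ * S) ^ (1 / p) := h3
        _ = (((k : ℝ≥0∞) + 1)⁻¹) ^ (1 / p) * S ^ (1 / p) :=
            ENNReal.mul_rpow_of_nonneg _ _ (by positivity)
        _ = ENNReal.ofReal (κ k) * S ^ (1 / p) := by
            rw [h4, ENNReal.inv_rpow, ← ENNReal.rpow_neg]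
    refine ⟨pt, ?_⟩
    have pt2 : ∀ k, ENNReal.ofReal (ω k * |v k|) ≤
        ENNReal.ofReal (ω k * κ k) * S ^ (1 / p) := by
      intro k
      calc ENNReal.ofReal (ω k * |v k|)
          = ENNReal.ofReal (ω k) * ENNReal.ofReal |v k| :=
            ENNReal.ofReal_mul (hω k).le
        _ ≤ ENNReal.ofReal (ω k) * (ENNReal.ofReal (κ k) * S ^ (1 / p)) :=
            mul_le_mul_right (pt k) _
        _ = ENNReal.ofReal (ω k * κ k) * S ^ (1 / p) := by
            rw [ENNReal.ofReal_mul (hω k).le, mul_assoc]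
    have hrw1 : ∀ j, ENNReal.ofReal ((ω j * |v j|) ^ q) =
        ENNReal.ofReal (ω j * |v j|) ^ q := fun j =>
      (ENNReal.ofReal_rpow_of_nonneg (mul_nonneg (hω j).le (abs_nonneg _)) hq.le).symm
    have hrw2 : ∀ j, ENNReal.ofReal ((ω j * κ j) ^ q) =
        ENNReal.ofReal (ω j * κ j) ^ q := fun j =>
      (ENNReal.ofReal_rpow_of_nonneg
        (mul_nonneg (hω j).le (by rw [hκ]; positivity)) hq.le).symm
    simp_rw [hrw1, hrw2]
    exact aux_sum_bound hq pt2
end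

section
/- For every k ∈ ℕ, the monomial X^k has the following expansion in probabilist's Hermite polynomials over ℚ: X^k = ∑_{n=0}^{⌊k/2⌋} ( k! / (2^n · n! · (k−2n)!) ) · He_{k−2n}(X), where He_m denotes the m-th monic probabilist's Hermite polynomial (in Mathlib, Polynomial.hermite m, mapped into ℚ[X]). -/
open scoped BigOperators

open Polynomial
lemma deriv_hermite (n : ℕ) :
    derivative (hermite (n+1)) = (n+1 : ℕ) * hermite n := by
  induction n with
  | zero => simp [hermite_one, hermite_zero]
  | succ n ih =>
    rw [hermite_succ (n+1), derivative_sub, derivative_mul, derivative_X, ih,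
        hermite_succ n]
    push_cast
    ring_nf
    simp [derivative_mul]
    ring

noncomputable def hQ (m : ℕ) : Polynomial ℚ := (hermite m).map (Int.castRingHom ℚ)

lemma X_mul_hQ (m : ℕ) : X * hQ m = hQ (m+1) + Polynomial.C ((m : ℚ)) * hQ (m-1) := by
  cases m with
  | zero => simp [hQ, hermite_one, hermite_zero]
  | succ j =>
    have h := hermite_succ (j+1)
    rw [deriv_hermite j] at h
    have := congrArg (Polynomial.map (Int.castRingHom ℚ)) h
    simp only [Polynomial.map_sub, Polynomial.map_mul, Polynomial.map_X,
      Polynomial.map_natCast] at this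
    simp only [hQ, Nat.add_sub_cancel, this, Polynomial.C_add, Polynomial.C_1,
      Polynomial.C_eq_natCast]
    push_cast
    ring

noncomputable def cc (k n : ℕ) : ℚ :=
  if 2*n ≤ k then (k.factorial : ℚ) / (2 ^ n * n.factorial * (k - 2*n).factorial) else 0

lemma cc_zero (k : ℕ) : cc k 0 = 1 := by
  simp [cc, Nat.factorial_ne_zero, div_self,
    (Nat.cast_ne_zero (R := ℚ)).2 (Nat.factorial_ne_zero k)]

lemma cc_of_gt {k n : ℕ} (h : k < 2*n) : cc k n = 0 := by
  simp [cc, Nat.not_le.2 h]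

lemma cc_succ_succ (k n : ℕ) :
    cc (k+1) (n+1) = cc k (n+1) + ((k - 2*n : ℕ) : ℚ) * cc k n := by
  rcases le_or_gt (2*(n+1)) k with h1 | h1
  · obtain ⟨m, hm⟩ := Nat.le.dest h1
    subst hm
    have e1 : 2*(n+1) ≤ 2*(n+1) + m + 1 := by omega
    have e2 : 2*n ≤ 2*(n+1) + m := by omega
    have e3 : 2*(n+1) + m + 1 - 2*(n+1) = m + 1 := by omega
    have e4 : 2*(n+1) + m - 2*(n+1) = m := by omega
    have e5 : 2*(n+1) + m - 2*n = m + 2 := by omega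
    rw [cc, cc, cc, if_pos (by omega), if_pos (by omega), if_pos e2, e3, e4, e5]
    rw [show 2*(n+1) + m + 1 = (2*(n+1)+m) + 1 from rfl, Nat.factorial_succ,
      Nat.factorial_succ (m+1), Nat.factorial_succ m, Nat.factorial_succ (n:ℕ),
      pow_succ]
    have hf1 : ((2*(n+1)+m).factorial : ℚ) ≠ 0 := Nat.cast_ne_zero.2 (Nat.factorial_ne_zero _)
    have hf2 : (m.factorial : ℚ) ≠ 0 := Nat.cast_ne_zero.2 (Nat.factorial_ne_zero _)
    have hf3 : (n.factorial : ℚ) ≠ 0 := Nat.cast_ne_zero.2 (Nat.factorial_ne_zero _)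
    have hf4 : (2:ℚ)^n ≠ 0 := by positivity
    push_cast
    field_simp
    ring
  · rcases le_or_gt (2*(n+1)) (k+1) with h2 | h2
    · -- k = 2n+1
      have hk : k = 2*n+1 := by omega
      subst hk
      rw [cc, cc, cc, if_pos (by omega), if_neg (by omega), if_pos (by omega)]
      have e5 : 2*n+1 - 2*n = 1 := by omega
      have e6 : 2*n+1+1 - 2*(n+1) = 0 := by omega
      rw [e5, e6]
      rw [show 2*n+1+1 = (2*n+1)+1 from rfl, Nat.factorial_succ,
        Nat.factorial_succ (n:ℕ), pow_succ]
      have hf2 : ((2*n+1).factorial : ℚ) ≠ 0 := Nat.cast_ne_zero.2 (Nat.factorial_ne_zero _)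
      have hf3 : (n.factorial : ℚ) ≠ 0 := Nat.cast_ne_zero.2 (Nat.factorial_ne_zero _)
      have hf4 : (2:ℚ)^n ≠ 0 := by positivity
      push_cast
      field_simp
      ring
    · have hk : k - 2*n = 0 := by omega
      rw [cc, cc, if_neg (by omega), if_neg (by omega), hk]
      simp

lemma key (k : ℕ) :
    (X : Polynomial ℚ) ^ k = ∑ n ∈ Finset.range (k+1), Polynomial.C (cc k n) * hQ (k - 2*n) := by
  induction k with
  | zero => simp [cc_zero, hQ, hermite_zero]
  | succ k ih =>
    have step1 : (X : Polynomial ℚ)^(k+1)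
        = ∑ n ∈ Finset.range (k+1), (Polynomial.C (cc k n) * hQ (k - 2*n + 1)
            + Polynomial.C (((k - 2*n : ℕ) : ℚ) * cc k n) * hQ (k - 2*n - 1)) := by
      rw [pow_succ, mul_comm, ih, Finset.mul_sum]
      refine Finset.sum_congr rfl fun n _ => ?_
      rw [mul_left_comm, X_mul_hQ, Polynomial.C_mul]
      ring
    rw [step1, Finset.sum_add_distrib]
    have eA : ∑ n ∈ Finset.range (k+1), Polynomial.C (cc k n) * hQ (k - 2*n + 1)
        = ∑ n ∈ Finset.range (k+1), Polynomial.C (cc k n) * hQ (k + 1 - 2*n) := by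
      refine Finset.sum_congr rfl fun n _ => ?_
      by_cases hn : 2*n ≤ k
      · rw [show k - 2*n + 1 = k + 1 - 2*n from by omega]
      · rw [cc_of_gt (by omega)]; simp
    have eB : ∑ n ∈ Finset.range (k+1), Polynomial.C (((k - 2*n : ℕ) : ℚ) * cc k n) * hQ (k - 2*n - 1)
        = ∑ n ∈ Finset.range (k+1), Polynomial.C (((k - 2*n : ℕ) : ℚ) * cc k n) * hQ (k + 1 - 2*(n+1)) := by
      refine Finset.sum_congr rfl fun n _ => ?_
      rw [show k - 2*n - 1 = k + 1 - 2*(n+1) from by omega]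
    rw [eA, eB]
    -- expand RHS
    rw [Finset.sum_range_succ' (fun m => Polynomial.C (cc (k+1) m) * hQ (k + 1 - 2*m)) (k+1)]
    simp only [cc_succ_succ, Polynomial.C_add, add_mul, Nat.mul_zero, Nat.sub_zero, cc_zero]
    rw [Finset.sum_add_distrib]
    -- now handle the first pieces
    have eA2 : ∑ n ∈ Finset.range (k+1), Polynomial.C (cc k n) * hQ (k + 1 - 2*n)
        = (∑ n ∈ Finset.range (k+1), Polynomial.C (cc k (n+1)) * hQ (k + 1 - 2*(n+1)))
          + Polynomial.C (cc k 0) * hQ (k + 1 - 2*0) := by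
      have hz : Polynomial.C (cc k (k+1)) * hQ (k + 1 - 2*(k+1)) = 0 := by
        rw [cc_of_gt (by omega)]; simp
      calc ∑ n ∈ Finset.range (k+1), Polynomial.C (cc k n) * hQ (k + 1 - 2*n)
          = ∑ n ∈ Finset.range (k+2), Polynomial.C (cc k n) * hQ (k + 1 - 2*n) := by
            rw [Finset.sum_range_succ (fun n => Polynomial.C (cc k n) * hQ (k + 1 - 2*n)) (k+1),
              hz, add_zero]
        _ = _ := Finset.sum_range_succ' (fun m => Polynomial.C (cc k m) * hQ (k + 1 - 2*m)) (k+1)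
    rw [eA2, cc_zero]
    simp only [Nat.mul_zero, Nat.sub_zero]
    ring


/-- Expansion of the monomial `X^k` in probabilist's Hermite polynomials:
`X^k = ∑_{n=0}^{⌊k/2⌋} (k! / (2^n n! (k-2n)!)) He_{k-2n}(X)` over `ℚ`. -/
theorem monomial_hermite_expansion (k : ℕ) :
    (Polynomial.X : Polynomial ℚ) ^ k =
      ∑ n ∈ Finset.range (k / 2 + 1),
        Polynomial.C ((k.factorial : ℚ) /
            (2 ^ n * n.factorial * (k - 2 * n).factorial)) *
          (Polynomial.hermite (k - 2 * n)).map (Int.castRingHom ℚ) := by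
  rw [key k]
  rw [← Finset.sum_subset (Finset.range_subset_range.2 (show k/2 + 1 ≤ k + 1 by omega))
    (fun n _ hn => by
      rw [cc_of_gt (by
        simp only [Finset.mem_range] at hn
        omega)]
      simp)]
  refine Finset.sum_congr rfl fun n hn => ?_
  simp only [Finset.mem_range] at hn
  rw [cc, if_pos (by omega)]
  rfl
end

section
/- Let X be a real Banach space, let c ≥ 0 and r > 1, and let u : ℕ → X satisfy ‖u_k‖ ≤ c·r^{-k} for all k ∈ ℕ. For j ∈ ℕ write (3/2)_j := ∏_{i=0}^{j−1} (3/2 + i) for the Pochhammer symbol. Then for every m ∈ ℕ the series û_m := ∑_{n=0}^{∞} ( √(2m+1) · (m+2n)! / (2^{m+2n} · n! · (3/2)_{m+n}) ) · u_{m+2n} converges absolutely in X, and ‖û_m‖ ≤ c · √(2m+1) · r^{-m} · r²/(r² − 1). (This is the decay estimate for Legendre expansion coefficients derived from geometric decay of power series coefficients.) -/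
open scoped BigOperators

private lemma Qpos (j : ℕ) : 0 < ∏ i ∈ Finset.range j, ((3 : ℝ) / 2 + (i : ℝ)) := by
  apply Finset.prod_pos
  intro i _
  positivity

private lemma key_fact : ∀ m n : ℕ, ((m + 2 * n).factorial : ℝ) ≤
    (2 : ℝ) ^ (m + 2 * n) * (n.factorial : ℝ) *
      ∏ i ∈ Finset.range (m + n), ((3 : ℝ) / 2 + (i : ℝ)) := by
  have base : ∀ n : ℕ, ((2 * n).factorial : ℝ) ≤
      (2 : ℝ) ^ (2 * n) * (n.factorial : ℝ) *
        ∏ i ∈ Finset.range n, ((3 : ℝ) / 2 + (i : ℝ)) := by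
    intro n
    induction n with
    | zero => simp
    | succ n ih =>
      have h2 : 2 * (n + 1) = (2 * n) + 1 + 1 := by ring
      rw [h2, Nat.factorial_succ, Nat.factorial_succ, Nat.factorial_succ,
        Finset.prod_range_succ, pow_succ, pow_succ]
      push_cast
      have hQ := Qpos n
      have hfn : (0 : ℝ) ≤ (n.factorial : ℝ) := by positivity
      have hx : (0 : ℝ) ≤ (n : ℝ) := Nat.cast_nonneg n
      set F : ℝ := ((2 * n).factorial : ℝ) with hF
      set A : ℝ := (2 : ℝ) ^ (2 * n) * (n.factorial : ℝ) *
        ∏ i ∈ Finset.range n, ((3 : ℝ) / 2 + (i : ℝ)) with hA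
      have hA0 : 0 ≤ A := by rw [hA]; positivity
      have h1 : (2 * (n : ℝ) + 2) * ((2 * (n : ℝ) + 1) * F) ≤
          (2 * (n : ℝ) + 2) * ((2 * (n : ℝ) + 1) * A) := by
        apply mul_le_mul_of_nonneg_left (mul_le_mul_of_nonneg_left ih (by linarith))
        linarith
      have h2' : (2 * (n : ℝ) + 2) * ((2 * (n : ℝ) + 1) * A) ≤
          (2 * (n : ℝ) + 2) * ((2 * (n : ℝ) + 3) * A) := by
        apply mul_le_mul_of_nonneg_left (mul_le_mul_of_nonneg_right (by linarith) hA0)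
        linarith
      have hE : (2:ℝ) ^ (2 * n) * 2 * 2 * (((n:ℝ) + 1) * (n.factorial : ℝ)) *
          ((∏ i ∈ Finset.range n, ((3 : ℝ) / 2 + (i : ℝ))) * (3 / 2 + (n : ℝ))) =
          (2 * (n : ℝ) + 2) * ((2 * (n : ℝ) + 3) * A) := by
        rw [hA]; ring
      nlinarith [h1, h2', hE]
  intro m
  induction m with
  | zero => intro n; simpa using base n
  | succ m ih =>
    intro n
    have h2 : m + 1 + 2 * n = (m + 2 * n) + 1 := by ring
    have h3 : m + 1 + n = (m + n) + 1 := by ring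
    rw [h2, h3, Nat.factorial_succ, Finset.prod_range_succ, pow_succ]
    push_cast
    have hQ := Qpos (m + n)
    have hfn : (0 : ℝ) ≤ (n.factorial : ℝ) := by positivity
    have hx : (0 : ℝ) ≤ (n : ℝ) := Nat.cast_nonneg n
    have hy : (0 : ℝ) ≤ (m : ℝ) := Nat.cast_nonneg m
    set F : ℝ := ((m + 2 * n).factorial : ℝ) with hF
    set A : ℝ := (2 : ℝ) ^ (m + 2 * n) * (n.factorial : ℝ) *
      ∏ i ∈ Finset.range (m + n), ((3 : ℝ) / 2 + (i : ℝ)) with hA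
    have hA0 : 0 ≤ A := by rw [hA]; positivity
    have h1 : ((m : ℝ) + 2 * n + 1) * F ≤ ((m : ℝ) + 2 * n + 1) * A :=
      mul_le_mul_of_nonneg_left (ih n) (by linarith)
    have h2' : ((m : ℝ) + 2 * n + 1) * A ≤ (2 * (m : ℝ) + 2 * n + 3) * A :=
      mul_le_mul_of_nonneg_right (by linarith) hA0
    have hE : (2:ℝ) ^ (m + 2 * n) * 2 * (n.factorial : ℝ) *
        ((∏ i ∈ Finset.range (m + n), ((3 : ℝ) / 2 + (i : ℝ))) * (3 / 2 + ((m:ℝ) + (n:ℝ)))) =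
        (2 * (m : ℝ) + 2 * (n : ℝ) + 3) * A := by
      rw [hA]; ring
    nlinarith [h1, h2', hE]

/-- Decay of normalised Legendre expansion coefficients from geometric decay of
power series coefficients: if `‖u_k‖ ≤ c r^{-k}` with `r > 1`, then for every `m` the
series `û_m = ∑_n √(2m+1) (m+2n)! / (2^{m+2n} n! (3/2)_{m+n}) ⋅ u_{m+2n}` converges
absolutely and `‖û_m‖ ≤ c √(2m+1) r^{-m} r²/(r²-1)`. -/
theorem legendre_coeff_decay
    {X : Type*} [NormedAddCommGroup X] [NormedSpace ℝ X] [CompleteSpace X]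
    (c r : ℝ) (hc : 0 ≤ c) (hr : 1 < r)
    (u : ℕ → X) (hu : ∀ k, ‖u k‖ ≤ c * (r ^ k)⁻¹) (m : ℕ) :
    Summable (fun n : ℕ =>
      ‖(Real.sqrt (2 * (m : ℝ) + 1) * ((m + 2 * n).factorial : ℝ) /
          ((2 : ℝ) ^ (m + 2 * n) * (n.factorial : ℝ) *
            ∏ i ∈ Finset.range (m + n), ((3 : ℝ) / 2 + (i : ℝ)))) • u (m + 2 * n)‖) ∧
    ‖∑' n : ℕ,
        (Real.sqrt (2 * (m : ℝ) + 1) * ((m + 2 * n).factorial : ℝ) /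
          ((2 : ℝ) ^ (m + 2 * n) * (n.factorial : ℝ) *
            ∏ i ∈ Finset.range (m + n), ((3 : ℝ) / 2 + (i : ℝ)))) • u (m + 2 * n)‖ ≤
      c * Real.sqrt (2 * (m : ℝ) + 1) * (r ^ m)⁻¹ * (r ^ 2 / (r ^ 2 - 1)) := by
  have hr0 : (0 : ℝ) < r := lt_trans one_pos hr
  have hs : (0 : ℝ) ≤ Real.sqrt (2 * (m : ℝ) + 1) := Real.sqrt_nonneg _
  set s := Real.sqrt (2 * (m : ℝ) + 1) with hsdef
  set f : ℕ → ℝ := fun n => s * ((m + 2 * n).factorial : ℝ) /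
      ((2 : ℝ) ^ (m + 2 * n) * (n.factorial : ℝ) *
        ∏ i ∈ Finset.range (m + n), ((3 : ℝ) / 2 + (i : ℝ))) with hf
  have hf_nonneg : ∀ n, 0 ≤ f n := by
    intro n
    apply div_nonneg (mul_nonneg hs (by positivity))
    have := Qpos (m + n); positivity
  have hf_le : ∀ n, f n ≤ s := by
    intro n
    rw [hf]
    have hden : (0 : ℝ) < (2 : ℝ) ^ (m + 2 * n) * (n.factorial : ℝ) *
        ∏ i ∈ Finset.range (m + n), ((3 : ℝ) / 2 + (i : ℝ)) := by
      have := Qpos (m + n); positivity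
    rw [div_le_iff₀ hden]
    exact mul_le_mul_of_nonneg_left (key_fact m n) hs
  set g : ℕ → ℝ := fun n => (c * s * (r ^ m)⁻¹) * ((r ^ 2)⁻¹) ^ n with hg
  have hbound : ∀ n, ‖f n • u (m + 2 * n)‖ ≤ g n := by
    intro n
    rw [norm_smul, Real.norm_eq_abs, abs_of_nonneg (hf_nonneg n)]
    calc f n * ‖u (m + 2 * n)‖ ≤ s * (c * (r ^ (m + 2 * n))⁻¹) := by
          apply mul_le_mul (hf_le n) (hu _) (norm_nonneg _) hs
      _ = (c * s * (r ^ m)⁻¹) * ((r ^ 2)⁻¹) ^ n := by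
          rw [pow_add, mul_inv, mul_comm (2 : ℕ) n, pow_mul, ← inv_pow]
          ring
  have hq : (r ^ 2)⁻¹ < 1 := by
    rw [inv_lt_one_iff₀]; right; nlinarith
  have hq0 : (0 : ℝ) ≤ (r ^ 2)⁻¹ := by positivity
  have hgsum : Summable g := by
    apply Summable.mul_left
    exact summable_geometric_of_lt_one hq0 hq
  have hsum : Summable (fun n : ℕ => ‖f n • u (m + 2 * n)‖) :=
    Summable.of_nonneg_of_le (fun n => norm_nonneg _) hbound hgsum
  refine ⟨hsum, ?_⟩
  have htsum_g : ∑' n, g n = (c * s * (r ^ m)⁻¹) * (1 - (r ^ 2)⁻¹)⁻¹ := by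
    rw [hg, tsum_mul_left, tsum_geometric_of_lt_one hq0 hq]
  have hr2 : (r : ℝ) ^ 2 ≠ 0 := by positivity
  have hgeom : (1 - (r ^ 2)⁻¹)⁻¹ = r ^ 2 / (r ^ 2 - 1) := by
    rw [show (1 - (r ^ 2)⁻¹ : ℝ) = (r ^ 2 - 1) / r ^ 2 by field_simp, inv_div]
  calc ‖∑' n, f n • u (m + 2 * n)‖ ≤ ∑' n, ‖f n • u (m + 2 * n)‖ :=
        norm_tsum_le_tsum_norm hsum
    _ ≤ ∑' n, g n := Summable.tsum_le_tsum hbound hsum hgsum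
    _ = c * s * (r ^ m)⁻¹ * (r ^ 2 / (r ^ 2 - 1)) := by rw [htsum_g, hgeom]
end

section
/- Let X be a real Banach space, let F ≥ 0 and 0 < C₁ < ρ, and let u : ℕ → X satisfy ‖u_k‖ ≤ F · e^k · (kρ/C₁)^{-k} for all k ≥ 1. Then there exists a constant K > 0, depending only on the ratio C₁/ρ, such that for every m ≥ 1 the series û_m := ∑_{n=0}^{∞} ( (m+2n)! / (2^n · n! · √(m!)) ) · u_{m+2n} converges absolutely in X and satisfies ‖û_m‖ ≤ K · F / √((m−1)!). (This is the decay estimate for Hermite expansion coefficients derived from the decay of power series coefficients of the solution of the log-affine parametric diffusion equation.) -/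
/-!
Stirling's bound `k! ≤ e √k (k/e)^k` cancels the factor `e^k k^(-k)` in the hypothesis, so with
`q = C₁/ρ` the `n`-th term of `û_m` is at most `F e (m+2n) q^(m+2n) / (2^n n! √(m!))`.
Since `m + 2n ≤ m 3^n`, the series is dominated by `F e m q^m / √(m!)` times the exponential
series at `3q²/2`, and `m q^m ≤ 1/(1-q)` yields `K(q) = e^(5/2) / (1-q)`.
-/

open Real Nat

lemma factorial_le_exp_one_mul_sqrt_mul_pow {n : ℕ} (hn : n ≠ 0) :
    (n ! : ℝ) ≤ exp 1 * √n * (n / exp 1) ^ n := by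
  obtain ⟨k, rfl⟩ := Nat.exists_eq_succ_of_ne_zero hn
  have hseq : Stirling.stirlingSeq (k + 1) ≤ exp 1 / √2 :=
    Stirling.stirlingSeq_one ▸ Stirling.stirlingSeq'_antitone (Nat.zero_le k)
  have hpos : 0 < √(2 * (k + 1 : ℕ) : ℝ) * ((k + 1 : ℕ) / exp 1) ^ (k + 1) := by positivity
  rw [Stirling.stirlingSeq, div_le_iff₀ hpos] at hseq
  refine hseq.trans_eq ?_
  rw [Real.sqrt_mul (by norm_num)]
  field_simp

lemma factorial_mul_exp_div_pow_le {k : ℕ} (hk : k ≠ 0) :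
    (k ! : ℝ) * exp k / k ^ k ≤ exp 1 * k := by
  have hk1 : (1 : ℝ) ≤ k := by exact_mod_cast Nat.one_le_iff_ne_zero.2 hk
  have hsqrt : √(k : ℝ) ≤ k := Real.sqrt_le_left (by positivity) |>.2 (by nlinarith)
  have hfac := factorial_le_exp_one_mul_sqrt_mul_pow hk
  rw [← Real.exp_one_pow, div_le_iff₀ (by positivity)]
  calc (k ! : ℝ) * exp 1 ^ k ≤ exp 1 * √k * (k / exp 1) ^ k * exp 1 ^ k := by gcongr
    _ = exp 1 * √k * k ^ k := by rw [mul_assoc, ← mul_pow, div_mul_cancel₀ _ (exp_ne_zero 1)]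
    _ ≤ exp 1 * k * k ^ k := by gcongr

lemma nat_mul_pow_le_inv_one_sub {q : ℝ} (h0 : 0 ≤ q) (h1 : q < 1) (m : ℕ) :
    m * q ^ m ≤ (1 - q)⁻¹ :=
  calc (m : ℝ) * q ^ m = ∑ i ∈ Finset.Ico 0 m, q ^ m := by simp
    _ ≤ ∑ i ∈ Finset.Ico 0 m, q ^ i :=
      Finset.sum_le_sum fun i hi => pow_le_pow_of_le_one h0 h1.le (Finset.mem_Ico.1 hi).2.le
    _ ≤ q ^ 0 / (1 - q) := geom_sum_Ico_le_of_lt_one h0 h1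
    _ = (1 - q)⁻¹ := by simp

lemma add_two_mul_le_mul_three_pow {m : ℕ} (hm : 1 ≤ m) (n : ℕ) :
    ((m + 2 * n : ℕ) : ℝ) ≤ m * 3 ^ n := by
  have hm' : (1 : ℝ) ≤ m := by exact_mod_cast hm
  have hbernoulli : 1 + n * (2 : ℝ) ≤ 3 ^ n := by
    simpa [show (1 : ℝ) + 2 = 3 by norm_num] using one_add_mul_le_pow (by norm_num : (-2 : ℝ) ≤ 2) n
  push_cast
  nlinarith

lemma summable_norm_and_norm_tsum_le_of_norm_le_exp_series {E : Type*} [SeminormedAddCommGroup E]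
    {f : ℕ → E} {c x : ℝ} (h : ∀ n, ‖f n‖ ≤ c * (x ^ n / n !)) :
    Summable (fun n => ‖f n‖) ∧ ‖∑' n, f n‖ ≤ c * exp x := by
  have hexp : HasSum (fun n => c * (x ^ n / n !)) (c * exp x) := by
    rw [Real.exp_eq_exp_ℝ]
    exact (NormedSpace.expSeries_div_hasSum_exp x).mul_left c
  exact ⟨hexp.summable.of_nonneg_of_le (fun n => norm_nonneg _) h, tsum_of_norm_bounded hexp h⟩

section Hermite

variable {X : Type*} [SeminormedAddCommGroup X] [NormedSpace ℝ X]

/-- `(m + 2n)! / (2^n n! √(m!))` is the coefficient of `H_m` in `z ^ (m + 2n)`. -/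
noncomputable def hermiteCoeffTerm (u : ℕ → X) (m n : ℕ) : X :=
  (((m + 2 * n) ! : ℝ) / ((2 : ℝ) ^ n * (n ! : ℝ) * √(m ! : ℝ))) • u (m + 2 * n)

lemma norm_hermiteCoeffTerm_le {u : ℕ → X} {F q : ℝ} (hF : 0 ≤ F) (hq : 0 ≤ q)
    (hu : ∀ k : ℕ, 1 ≤ k → ‖u k‖ ≤ F * exp k * (q ^ k / k ^ k)) {m : ℕ} (hm : 1 ≤ m) (n : ℕ) :
    ‖hermiteCoeffTerm u m n‖ ≤
      F * exp 1 * m * q ^ m / √(m ! : ℝ) * ((3 * q ^ 2 / 2) ^ n / n !) := by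
  set k := m + 2 * n with hk
  have hk0 : k ≠ 0 := by omega
  calc ‖hermiteCoeffTerm u m n‖
      = (k ! : ℝ) / (2 ^ n * n ! * √(m ! : ℝ)) * ‖u k‖ := by
        rw [hermiteCoeffTerm, norm_smul, Real.norm_of_nonneg (by positivity)]
    _ ≤ (k ! : ℝ) / (2 ^ n * n ! * √(m ! : ℝ)) * (F * exp k * (q ^ k / k ^ k)) := by
        gcongr; exact hu k (by omega)
    _ = F * ((k ! : ℝ) * exp k / k ^ k) * q ^ k / (2 ^ n * n ! * √(m ! : ℝ)) := by
        field_simp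
    _ ≤ F * (exp 1 * (m * 3 ^ n)) * q ^ k / (2 ^ n * n ! * √(m ! : ℝ)) := by
        gcongr
        exact (factorial_mul_exp_div_pow_le hk0).trans
          (mul_le_mul_of_nonneg_left (add_two_mul_le_mul_three_pow hm n) (exp_pos 1).le)
    _ = F * exp 1 * m * q ^ m / √(m ! : ℝ) * ((3 * q ^ 2 / 2) ^ n / n !) := by
        rw [hk, pow_add, pow_mul, div_pow, mul_pow]
        field_simp

end Hermite

/-- Decay of normalised Hermite expansion coefficients: there is a constant `K > 0`,
depending only on the ratio `C₁/ρ`, such that whenever `0 < C₁ < ρ` and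
`‖u_k‖ ≤ F e^k (kρ/C₁)^{-k}` for all `k ≥ 1`, then for every `m ≥ 1` the series
`û_m = ∑_n (m+2n)! / (2^n n! √(m!)) ⋅ u_{m+2n}` converges absolutely and
`‖û_m‖ ≤ K(C₁/ρ) F / √((m-1)!)`. -/
theorem hermite_coeff_decay :
    ∃ K : ℝ → ℝ,
      ∀ C₁ ρ : ℝ, 0 < C₁ → C₁ < ρ →
        0 < K (C₁ / ρ) ∧
        ∀ (X : Type) [NormedAddCommGroup X] [NormedSpace ℝ X] [CompleteSpace X]
          (F : ℝ), 0 ≤ F →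
          ∀ u : ℕ → X,
            (∀ k : ℕ, 1 ≤ k →
              ‖u k‖ ≤ F * Real.exp (k : ℝ) * (((k : ℝ) * ρ / C₁) ^ k)⁻¹) →
            ∀ m : ℕ, 1 ≤ m →
              Summable (fun n : ℕ =>
                ‖(((m + 2 * n).factorial : ℝ) /
                    ((2 : ℝ) ^ n * (n.factorial : ℝ) *
                      Real.sqrt (m.factorial : ℝ))) • u (m + 2 * n)‖) ∧
              ‖∑' n : ℕ,
                  (((m + 2 * n).factorial : ℝ) /
                    ((2 : ℝ) ^ n * (n.factorial : ℝ) *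
                      Real.sqrt (m.factorial : ℝ))) • u (m + 2 * n)‖ ≤
                K (C₁ / ρ) * F / Real.sqrt ((m - 1).factorial : ℝ) := by
  refine ⟨fun q => exp (5 / 2) / (1 - q), fun C₁ ρ hC₁ hC₁ρ => ?_⟩
  have hρ : 0 < ρ := hC₁.trans hC₁ρ
  have hq0 : 0 ≤ C₁ / ρ := by positivity
  have hq1 : C₁ / ρ < 1 := (div_lt_one hρ).2 hC₁ρ
  have h1q : 0 < 1 - C₁ / ρ := by linarith
  refine ⟨by positivity, fun X _ _ _ F hF u hu m hm => ?_⟩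
  have hu' : ∀ k : ℕ, 1 ≤ k → ‖u k‖ ≤ F * exp k * ((C₁ / ρ) ^ k / k ^ k) := fun k hk => by
    convert hu k hk using 2
    rw [← inv_pow, inv_div, ← div_pow, div_div, mul_comm ρ]
  obtain ⟨hsum, hnorm⟩ :=
    summable_norm_and_norm_tsum_le_of_norm_le_exp_series (norm_hermiteCoeffTerm_le hF hq0 hu' hm)
  refine ⟨hsum, hnorm.trans ?_⟩
  have hsqrt : √((m - 1) ! : ℝ) ≤ √(m ! : ℝ) :=
    Real.sqrt_le_sqrt (by exact_mod_cast Nat.factorial_le (Nat.sub_le m 1))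
  have hexp : exp (3 * (C₁ / ρ) ^ 2 / 2) ≤ exp (3 / 2) := by
    gcongr; nlinarith
  calc F * exp 1 * m * (C₁ / ρ) ^ m / √(m ! : ℝ) * exp (3 * (C₁ / ρ) ^ 2 / 2)
      = F * exp 1 * (m * (C₁ / ρ) ^ m) * exp (3 * (C₁ / ρ) ^ 2 / 2) / √(m ! : ℝ) := by ring
    _ ≤ F * exp 1 * (1 - C₁ / ρ)⁻¹ * exp (3 / 2) / √((m - 1) ! : ℝ) := by
        gcongr
        exact nat_mul_pow_le_inv_one_sub hq0 hq1 m
    _ = exp (5 / 2) / (1 - C₁ / ρ) * F / √((m - 1) ! : ℝ) := by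
        rw [show (5 / 2 : ℝ) = 1 + 3 / 2 by norm_num, exp_add]
        ring
end

section
/- Let A ∈ ℝ^{n×m} be a matrix of rank r and let ω ∈ ℝ^n. Then there exist matrices Q ∈ ℝ^{n×r} and C ∈ ℝ^{r×m} such that A = Q C, Qᵀ Q = I_r, and Qᵀ·diag(ω)·Q is a diagonal matrix. Moreover, if A has at most R nonzero entries, then r ≤ R and each of Q and C has at most R·r nonzero entries. (Existence and sparsity of the ω-orthogonal QC decomposition.) -/
/-!
Let `W ⊆ ℝⁿ` be the column space of `A`, so `dim W = rank A`. Compressing the symmetric operator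
`diag ω` to `W` (composing with the orthogonal projection onto `W`) gives a symmetric operator on
`W`, and the spectral theorem yields an orthonormal basis `q₁, …, q_r` of `W` with
`⟪q_k, diag(ω) q_l⟫ = 0` for `k ≠ l`. These are the columns of `Q`, and `C := Qᵀ A`; since `Q Qᵀ`
is the orthogonal projection onto `W`, which contains the columns of `A`, we get `Q C = A`.

For sparsity: every column of `Q` lies in `W` and so vanishes on the zero rows of `A`, while
`C = Qᵀ A` vanishes on the zero columns of `A`. Both the nonzero rows and the nonzero columns of
`A` number at most `R`, and `rank A` is at most the number of nonzero columns.
-/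

open Matrix Module Submodule

section Compression

variable {𝕜 E : Type*} [RCLike 𝕜] [NormedAddCommGroup E] [InnerProductSpace 𝕜 E]

theorem LinearMap.IsSymmetric.exists_orthonormalBasis_inner_eq_zero {T : E →ₗ[𝕜] E}
    (hT : T.IsSymmetric) (W : Submodule 𝕜 E) [FiniteDimensional 𝕜 W] {r : ℕ}
    (hr : finrank 𝕜 W = r) :
    ∃ b : OrthonormalBasis (Fin r) 𝕜 W, Pairwise fun k l => inner 𝕜 (b k : E) (T (b l)) = 0 := by
  let S : W →ₗ[𝕜] W := W.orthogonalProjectionOnto.toLinearMap ∘ₗ T ∘ₗ W.subtype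
  have hS : S.IsSymmetric := fun x y => by
    simp only [S, LinearMap.comp_apply, ContinuousLinearMap.coe_coe,
      inner_orthogonalProjectionOnto_eq_of_mem_right, inner_orthogonalProjectionOnto_eq_of_mem_left]
    exact hT _ _
  set b := hS.eigenvectorBasis hr
  refine ⟨b, fun k l hkl => ?_⟩
  calc inner 𝕜 (b k : E) (T (b l)) = inner 𝕜 (b k) (S (b l)) :=
          (inner_orthogonalProjectionOnto_eq_of_mem_left _ _).symm
    _ = 0 := by
        rw [hS.apply_eigenvectorBasis, inner_smul_right,
          orthonormal_iff_ite.mp b.orthonormal, if_neg hkl, mul_zero]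

end Compression

namespace Matrix

section Sparsity

variable {ι κ α : Type*} [Finite ι] [Finite κ] [Zero α]

theorem ncard_support_row_le (A : Matrix ι κ α) :
    (Function.support A.row).ncard ≤ {p : ι × κ | A p.1 p.2 ≠ 0}.ncard := by
  have h : Function.support A.row = Prod.fst '' {p : ι × κ | A p.1 p.2 ≠ 0} := by
    ext i; simp [Function.mem_support, Function.ne_iff, row_apply]
  exact h ▸ Set.ncard_image_le (Set.toFinite _)

theorem ncard_support_col_le (A : Matrix ι κ α) :
    (Function.support A.col).ncard ≤ {p : ι × κ | A p.1 p.2 ≠ 0}.ncard := by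
  have h : Function.support A.col = Prod.snd '' {p : ι × κ | A p.1 p.2 ≠ 0} := by
    ext j; simp [Function.mem_support, Function.ne_iff, col_apply]
  exact h ▸ Set.ncard_image_le (Set.toFinite _)

theorem ncard_setOf_ne_zero_le_of_support_row_subset {A : Matrix ι κ α} {s : Set ι}
    (hs : Function.support A.row ⊆ s) :
    {p : ι × κ | A p.1 p.2 ≠ 0}.ncard ≤ s.ncard * Nat.card κ := by
  have h : {p : ι × κ | A p.1 p.2 ≠ 0} ⊆ s ×ˢ Set.univ := fun p hp =>
    ⟨hs fun hrow => hp (congrFun hrow p.2), trivial⟩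
  simpa [Set.ncard_prod] using Set.ncard_le_ncard h (Set.toFinite _)

theorem ncard_setOf_ne_zero_le_of_support_col_subset {A : Matrix ι κ α} {t : Set κ}
    (ht : Function.support A.col ⊆ t) :
    {p : ι × κ | A p.1 p.2 ≠ 0}.ncard ≤ Nat.card ι * t.ncard := by
  have h : {p : ι × κ | A p.1 p.2 ≠ 0} ⊆ Set.univ ×ˢ t := fun p hp =>
    ⟨trivial, ht fun hcol => hp (congrFun hcol p.1)⟩
  simpa [Set.ncard_prod] using Set.ncard_le_ncard h (Set.toFinite _)

end Sparsity

theorem support_col_mul_subset {ι κ μ R : Type*} [Fintype κ] [NonUnitalNonAssocSemiring R]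
    (B : Matrix ι κ R) (A : Matrix κ μ R) :
    Function.support (B * A).col ⊆ Function.support A.col := by
  intro j hj hA
  have hA' : ∀ k, A k j = 0 := congrFun hA
  exact hj (funext fun i => by simp [col_apply, mul_apply, hA'])

theorem rank_le_ncard_support_col {ι κ R : Type*} [Fintype ι] [Fintype κ] [Field R]
    (A : Matrix ι κ R) : A.rank ≤ (Function.support A.col).ncard := by
  classical
  rw [← rank_transpose, Set.ncard_eq_toFinset_card']
  exact Aᵀ.rank_le_card_of_support_subset _ (by simp [row_transpose])

section ColumnSpace

variable {ι κ : Type*}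

theorem finrank_span_toLp_col_eq_rank [Fintype κ] (A : Matrix ι κ ℝ) :
    finrank ℝ (span ℝ (Set.range fun j => WithLp.toLp 2 (A.col j))) = A.rank := by
  rw [rank_eq_finrank_span_cols, ← (WithLp.linearEquiv 2 ℝ (ι → ℝ)).symm.finrank_map_eq, map_span,
    ← Set.range_comp]
  rfl

theorem apply_eq_zero_of_mem_span_toLp_col {A : Matrix ι κ ℝ} {i : ι} (hi : A.row i = 0)
    {v : EuclideanSpace ℝ ι} (hv : v ∈ span ℝ (Set.range fun j => WithLp.toLp 2 (A.col j))) :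
    v i = 0 := by
  induction hv using Submodule.span_induction with
  | mem _ h => obtain ⟨j, rfl⟩ := h; exact congrFun hi j
  | zero => rfl
  | add _ _ _ _ hx hy => simp [hx, hy]
  | smul _ _ _ hx => simp [hx]

theorem transpose_mul_mul_apply_eq_inner [Fintype ι] [DecidableEq ι] (v : κ → EuclideanSpace ℝ ι)
    (M : Matrix ι ι ℝ) (k l : κ) :
    ((of fun i k => v k i)ᵀ * M * of fun i k => v k i) k l =
      inner ℝ (v k) (toLpLin 2 2 M (v l)) := by
  simp only [mul_apply, transpose_apply, of_apply, Finset.sum_mul,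
    EuclideanSpace.inner_eq_star_dotProduct, dotProduct, ofLp_toLpLin, toLin'_apply, mulVec,
    Pi.star_apply, star_trivial]
  rw [Finset.sum_comm]
  exact Finset.sum_congr rfl fun _ _ => Finset.sum_congr rfl fun _ _ => by ring

theorem mul_transpose_mul_eq_self_of_col_mem [Fintype ι] [Fintype κ] {μ : Type*} [Fintype μ]
    {W : Submodule ℝ (EuclideanSpace ℝ ι)} (b : OrthonormalBasis κ ℝ W) (A : Matrix ι μ ℝ)
    (hA : ∀ j, WithLp.toLp 2 (A.col j) ∈ W) :
    (of fun i k => (b k : EuclideanSpace ℝ ι) i) *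
      ((of fun i k => (b k : EuclideanSpace ℝ ι) i)ᵀ * A) = A := by
  ext i j
  have h := congrArg (fun w : W => (w : EuclideanSpace ℝ ι) i) (b.sum_repr' ⟨_, hA j⟩)
  simp only [coe_inner, EuclideanSpace.inner_eq_star_dotProduct, dotProduct, col_apply,
    Pi.star_apply, star_trivial, AddSubmonoidClass.coe_finsetSum, SetLike.val_smul,
    WithLp.ofLp_sum, WithLp.ofLp_smul, Finset.sum_apply, Pi.smul_apply, smul_eq_mul] at h
  simp only [mul_apply, of_apply, transpose_apply, mul_comm, Finset.mul_sum, mul_left_comm, ← h]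

theorem exists_orthonormal_cols_isDiag [Fintype ι] [DecidableEq ι] [Fintype κ] (A : Matrix ι κ ℝ)
    (ω : ι → ℝ) :
    ∃ Q : Matrix ι (Fin A.rank) ℝ, Qᵀ * Q = 1 ∧ (Qᵀ * diagonal ω * Q).IsDiag ∧
      Q * (Qᵀ * A) = A ∧ Function.support Q.row ⊆ Function.support A.row := by
  have hD : (toLpLin 2 2 (diagonal ω)).IsSymmetric :=
    isSymmetric_toEuclideanLin_iff.mpr (isHermitian_diagonal ω)
  obtain ⟨b, hb⟩ := hD.exists_orthonormalBasis_inner_eq_zero _ (finrank_span_toLp_col_eq_rank A)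
  refine ⟨of fun i k => (b k : EuclideanSpace ℝ ι) i, ?_,
    fun k l hkl => (transpose_mul_mul_apply_eq_inner _ _ k l).trans (hb hkl),
    mul_transpose_mul_eq_self_of_col_mem b A fun j => subset_span ⟨j, rfl⟩,
    Function.support_subset_iff'.mpr fun i hi =>
      funext fun k => apply_eq_zero_of_mem_span_toLp_col (Function.notMem_support.mp hi) (b k).2⟩
  · ext k l
    have h := transpose_mul_mul_apply_eq_inner (fun k => (b k : EuclideanSpace ℝ ι)) 1 k l
    rw [Matrix.mul_one, toLpLin_one, LinearMap.id_apply, ← coe_inner] at h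
    rw [h, one_apply]
    exact orthonormal_iff_ite.mp b.orthonormal k l

end ColumnSpace

end Matrix

/-- Existence and sparsity of the `ω`-orthogonal QC decomposition: a rank-`r` matrix
`A` factors as `A = Q C` with `QᵀQ = I` and `Qᵀ diag(ω) Q` diagonal; if moreover `A`
has at most `R` nonzero entries, then `r ≤ R` and both `Q` and `C` have at most
`R⋅r` nonzero entries. -/
theorem omega_orthogonal_qc_decomposition
    (n m : ℕ) (A : Matrix (Fin n) (Fin m) ℝ) (ω : Fin n → ℝ)
    (r : ℕ) (hrank : A.rank = r) (R : ℕ) :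
    ∃ (Q : Matrix (Fin n) (Fin r) ℝ) (C : Matrix (Fin r) (Fin m) ℝ),
      A = Q * C ∧
      Qᵀ * Q = 1 ∧
      (Qᵀ * Matrix.diagonal ω * Q).IsDiag ∧
      ({p : Fin n × Fin m | A p.1 p.2 ≠ 0}.ncard ≤ R →
        r ≤ R ∧
        {p : Fin n × Fin r | Q p.1 p.2 ≠ 0}.ncard ≤ R * r ∧
        {p : Fin r × Fin m | C p.1 p.2 ≠ 0}.ncard ≤ R * r) := by
  subst hrank
  obtain ⟨Q, hQQ, hdiag, hQC, hQrows⟩ := A.exists_orthonormal_cols_isDiag ω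
  refine ⟨Q, Qᵀ * A, hQC.symm, hQQ, hdiag, fun hA => ⟨?_, ?_, ?_⟩⟩
  · exact A.rank_le_ncard_support_col.trans (A.ncard_support_col_le.trans hA)
  · calc _ ≤ (Function.support A.row).ncard * Nat.card (Fin A.rank) :=
          ncard_setOf_ne_zero_le_of_support_row_subset hQrows
      _ ≤ R * A.rank := by
          rw [Nat.card_fin]
          exact Nat.mul_le_mul_right _ (A.ncard_support_row_le.trans hA)
  · calc _ ≤ Nat.card (Fin A.rank) * (Function.support A.col).ncard :=
          ncard_setOf_ne_zero_le_of_support_col_subset (support_col_mul_subset Qᵀ A)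
      _ ≤ R * A.rank := by
          rw [Nat.card_fin, mul_comm]
          exact Nat.mul_le_mul_right _ (A.ncard_support_col_le.trans hA)
end

section
/- Let V be a real vector space equipped with a norm ‖·‖ and two seminorms ‖·‖_n and ‖·‖_{w,∞} such that ‖v‖ ≤ ‖v‖_{w,∞} and ‖v‖_n ≤ ‖v‖_{w,∞} for all v ∈ V. Let δ ∈ [0, 1/2] and τ ∈ [0, 1/4], and let a ∈ V with ‖a‖ > 0 satisfy the pointwise restricted isometry property |‖a‖_n² − ‖a‖²| ≤ δ‖a‖². Then every b ∈ V with ‖a − b‖_{w,∞} ≤ τ‖a‖ satisfies |‖b‖_n² − ‖b‖²| ≤ (δ + 15τ)‖b‖². In particular, if additionally τ ≤ δ/15, then |‖b‖_n² − ‖b‖²| ≤ 2δ‖b‖² for all such b. (The restricted isometry property at a point extends to a ‖·‖_{w,∞}-neighbourhood of that point.) -/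
private lemma rip_coef_aux (δ τ : ℝ) (hδ0 : 0 ≤ δ) (hδ : δ ≤ 1 / 2)
    (hτ0 : 0 ≤ τ) (hτ : τ ≤ 1 / 4) : δ + τ * (5 + δ) ≤ (δ + 15 * τ) * (1 - τ) ^ 2 := by
  nlinarith [mul_nonneg hτ0 (by linarith : (0:ℝ) ≤ 10 - 3 * δ - 30 * τ),
    mul_nonneg (mul_nonneg hτ0 hτ0) hτ0, mul_nonneg (mul_nonneg hτ0 hτ0) hδ0]

/-- The pointwise restricted isometry property extends to a `‖·‖_{w,∞}`-neighbourhood: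
if `|‖a‖_n² - ‖a‖²| ≤ δ‖a‖²` with `δ ≤ 1/2`, `τ ≤ 1/4`, then every `b` with
`‖a - b‖_{w,∞} ≤ τ‖a‖` satisfies `|‖b‖_n² - ‖b‖²| ≤ (δ + 15τ)‖b‖²`; if moreover
`τ ≤ δ/15` then `|‖b‖_n² - ‖b‖²| ≤ 2δ‖b‖²`. -/
theorem rip_extends_to_neighbourhood
    {V : Type*} [NormedAddCommGroup V] [NormedSpace ℝ V]
    (Nn Nw : Seminorm ℝ V)
    (hdom : ∀ v : V, ‖v‖ ≤ Nw v) (hdomn : ∀ v : V, Nn v ≤ Nw v)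
    (δ τ : ℝ) (hδ0 : 0 ≤ δ) (hδ : δ ≤ 1 / 2) (hτ0 : 0 ≤ τ) (hτ : τ ≤ 1 / 4)
    (a : V) (ha : 0 < ‖a‖)
    (hrip : |Nn a ^ 2 - ‖a‖ ^ 2| ≤ δ * ‖a‖ ^ 2) :
    (∀ b : V, Nw (a - b) ≤ τ * ‖a‖ →
      |Nn b ^ 2 - ‖b‖ ^ 2| ≤ (δ + 15 * τ) * ‖b‖ ^ 2) ∧
    (τ ≤ δ / 15 → ∀ b : V, Nw (a - b) ≤ τ * ‖a‖ →
      |Nn b ^ 2 - ‖b‖ ^ 2| ≤ 2 * δ * ‖b‖ ^ 2) := by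
  have hmain : ∀ b : V, Nw (a - b) ≤ τ * ‖a‖ →
      |Nn b ^ 2 - ‖b‖ ^ 2| ≤ (δ + 15 * τ) * ‖b‖ ^ 2 := by
    intro b hb
    have h1 : Nn (a - b) ≤ τ * ‖a‖ := (hdomn _).trans hb
    have h2 : ‖a - b‖ ≤ τ * ‖a‖ := (hdom _).trans hb
    have h3 : Nn b ≤ Nn a + τ * ‖a‖ := by
      have h := map_add_le_add Nn a (b - a)
      have hrev : Nn (b - a) = Nn (a - b) := map_sub_rev Nn b a
      simp only [add_sub_cancel] at h
      linarith
    have h4 : Nn a ≤ Nn b + τ * ‖a‖ := by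
      have h := map_add_le_add Nn b (a - b)
      simp only [add_sub_cancel] at h
      linarith
    have h5 : ‖b‖ ≤ ‖a‖ + τ * ‖a‖ := by
      have h := norm_add_le a (b - a)
      have hrev : ‖b - a‖ = ‖a - b‖ := norm_sub_rev b a
      simp only [add_sub_cancel] at h
      linarith
    have h6 : ‖a‖ ≤ ‖b‖ + τ * ‖a‖ := by
      have h := norm_add_le b (a - b)
      simp only [add_sub_cancel] at h
      linarith
    have hP0 : 0 ≤ Nn a := apply_nonneg Nn a
    have hQ0 : 0 ≤ Nn b := apply_nonneg Nn b
    have hB0 : 0 ≤ ‖b‖ := norm_nonneg b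
    have hBA : (1 - τ) * ‖a‖ ≤ ‖b‖ := by linarith
    have hBA0 : (0:ℝ) ≤ (1 - τ) * ‖a‖ := by nlinarith
    have hA2B : (1 - τ) ^ 2 * ‖a‖ ^ 2 ≤ ‖b‖ ^ 2 := by
      nlinarith [mul_le_mul hBA hBA hBA0 hB0]
    rw [abs_le] at hrip ⊢
    obtain ⟨hr1, hr2⟩ := hrip
    have t1 : Nn b * Nn b ≤ (Nn a + τ * ‖a‖) * (Nn a + τ * ‖a‖) :=
      mul_le_mul h3 h3 hQ0 (by positivity)
    have t2 : Nn a * Nn a ≤ (Nn b + τ * ‖a‖) * (Nn b + τ * ‖a‖) :=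
      mul_le_mul h4 h4 hP0 (by positivity)
    have t3 : ‖b‖ * ‖b‖ ≤ (‖a‖ + τ * ‖a‖) * (‖a‖ + τ * ‖a‖) :=
      mul_le_mul h5 h5 hB0 (by positivity)
    have t4 : 0 ≤ τ * (Nn a - ‖a‖) ^ 2 := mul_nonneg hτ0 (sq_nonneg _)
    have t5 : τ * (Nn a ^ 2 - ‖a‖ ^ 2) ≤ τ * (δ * ‖a‖ ^ 2) :=
      mul_le_mul_of_nonneg_left hr2 hτ0
    have t6 : (τ * ‖a‖) * Nn b ≤ (τ * ‖a‖) * (Nn a + τ * ‖a‖) :=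
      mul_le_mul_of_nonneg_left h3 (mul_nonneg hτ0 ha.le)
    have hττ : τ ^ 2 * ‖a‖ ^ 2 ≤ (1 / 4) * (τ * ‖a‖ ^ 2) := by
      nlinarith [mul_nonneg hτ0 (sq_nonneg ‖a‖)]
    have u1 : Nn b ^ 2 - ‖b‖ ^ 2 ≤ (δ + τ * (5 + δ)) * ‖a‖ ^ 2 := by
      linarith [t1, t4, t5, hA2B, hττ, mul_nonneg hτ0 (sq_nonneg ‖a‖)]
    have u2 : ‖b‖ ^ 2 - Nn b ^ 2 ≤ (δ + τ * (5 + δ)) * ‖a‖ ^ 2 := by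
      linarith [t2, t3, t4, t5, t6, hττ, mul_nonneg hτ0 (sq_nonneg ‖a‖)]
    have hcoef := rip_coef_aux δ τ hδ0 hδ hτ0 hτ
    have hfin : (δ + τ * (5 + δ)) * ‖a‖ ^ 2 ≤ (δ + 15 * τ) * ‖b‖ ^ 2 := by
      calc (δ + τ * (5 + δ)) * ‖a‖ ^ 2 ≤ ((δ + 15 * τ) * (1 - τ) ^ 2) * ‖a‖ ^ 2 :=
            mul_le_mul_of_nonneg_right hcoef (sq_nonneg _)
        _ = (δ + 15 * τ) * ((1 - τ) ^ 2 * ‖a‖ ^ 2) := by ring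
        _ ≤ (δ + 15 * τ) * ‖b‖ ^ 2 := mul_le_mul_of_nonneg_left hA2B (by linarith)
    constructor <;> linarith
  refine ⟨hmain, fun hτδ b hb => (hmain b hb).trans ?_⟩
  have := sq_nonneg ‖b‖
  nlinarith
end

section
/- Let V be a real vector space equipped with a norm ‖·‖ and two seminorms ‖·‖_n and ‖·‖_{w,∞} such that ‖v‖ ≤ ‖v‖_{w,∞} and ‖v‖_n ≤ ‖v‖_{w,∞} for all v ∈ V. Let δ ∈ [0, 1/2], r ∈ [0, 1/4], and let A, B ⊆ V. Assume that for every a ∈ A there exist t > 0 and b ∈ B with ‖b‖ > 0 such that ‖t·a − b/‖b‖‖_{w,∞} ≤ r (i.e. the scale-invariant distance d_{siL∞_w}(A, B) is at most r). If the restricted isometry property RIP_B(δ) holds, then RIP_A(δ + 15r) holds. In particular, if additionally r ≤ δ/15, then RIP_B(δ) implies RIP_A(2δ). -/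
/-- Scalar arithmetic core of the RIP transfer argument. -/
lemma rip_transfer_scalar (δ r x y z : ℝ)
    (hδ0 : 0 ≤ δ) (hδ : δ ≤ 1 / 2) (hr0 : 0 ≤ r) (hr : r ≤ 1 / 4)
    (hx0 : 0 ≤ x) (hy0 : 0 ≤ y) (hz0 : 0 ≤ z)
    (hz1 : 1 - δ ≤ z ^ 2) (hz2 : z ^ 2 ≤ 1 + δ)
    (hxz1 : -r ≤ x - z) (hxz2 : x - z ≤ r)
    (hy11 : -r ≤ y - 1) (hy12 : y - 1 ≤ r) :
    (1 - (δ + 15 * r)) * y ^ 2 ≤ x ^ 2 ∧ x ^ 2 ≤ (1 + (δ + 15 * r)) * y ^ 2 := by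
  have hz54 : z ≤ 5 / 4 := by nlinarith [sq_nonneg (z - 5 / 4)]
  have hz25 : 2 / 5 ≤ z := by
    nlinarith [mul_nonneg (by linarith : (0:ℝ) ≤ 5 / 4 - z) hz0]
  have hrz : r * z ≤ r * (5 / 4) := mul_le_mul_of_nonneg_left hz54 hr0
  have hxU : x ^ 2 ≤ 1 + δ + 5 * r / 2 + r ^ 2 := by
    nlinarith [mul_nonneg (by linarith : (0:ℝ) ≤ (z + r) - x)
      (by linarith : (0:ℝ) ≤ (z + r) + x)]
  have hyL : (1 - r) ^ 2 ≤ y ^ 2 := by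
    nlinarith [mul_nonneg (by linarith : (0:ℝ) ≤ y - (1 - r))
      (by linarith : (0:ℝ) ≤ y + (1 - r))]
  have h15pos : (0:ℝ) ≤ 1 + (δ + 15 * r) := by linarith
  constructor
  · rcases le_or_gt (1 - (δ + 15 * r)) 0 with h | h
    · have : (1 - (δ + 15 * r)) * y ^ 2 ≤ 0 :=
        mul_nonpos_of_nonpos_of_nonneg h (sq_nonneg y)
      nlinarith [sq_nonneg x]
    · have hxL : 1 - δ - 5 * r / 2 ≤ x ^ 2 := by
        nlinarith [mul_nonneg (by linarith : (0:ℝ) ≤ x - (z - r))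
          (by linarith : (0:ℝ) ≤ x + (z - r))]
      have hyU : y ^ 2 ≤ (1 + r) ^ 2 := by
        nlinarith [mul_nonneg (by linarith : (0:ℝ) ≤ (1 + r) - y)
          (by linarith : (0:ℝ) ≤ (1 + r) + y)]
      have hmid : (1 - (δ + 15 * r)) * (1 + r) ^ 2 ≤ 1 - δ - 5 * r / 2 := by
        have e : 1 - δ - 5 * r / 2 - (1 - (δ + 15 * r)) * (1 + r) ^ 2
            = 21 * r / 2 + 2 * (r * δ) + 29 * (r * r) + (r * r) * δ
              + 15 * ((r * r) * r) := by ring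
        linarith [mul_nonneg hr0 hδ0, mul_nonneg hr0 hr0,
          mul_nonneg (mul_nonneg hr0 hr0) hδ0,
          mul_nonneg (mul_nonneg hr0 hr0) hr0, e]
      calc (1 - (δ + 15 * r)) * y ^ 2 ≤ (1 - (δ + 15 * r)) * (1 + r) ^ 2 :=
            mul_le_mul_of_nonneg_left hyU h.le
        _ ≤ 1 - δ - 5 * r / 2 := hmid
        _ ≤ x ^ 2 := hxL
  · have hmid : 1 + δ + 5 * r / 2 + r ^ 2 ≤ (1 + (δ + 15 * r)) * (1 - r) ^ 2 := by
      have e : (1 + (δ + 15 * r)) * (1 - r) ^ 2 - (1 + δ + 5 * r / 2 + r ^ 2)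
          = 21 * r / 2 - 2 * (r * δ) - 30 * (r * r) + (r * r) * δ
            + 15 * ((r * r) * r) := by ring
      linarith [mul_le_mul_of_nonneg_left hδ hr0, mul_le_mul_of_nonneg_left hr hr0,
        mul_nonneg (mul_nonneg hr0 hr0) hδ0,
        mul_nonneg (mul_nonneg hr0 hr0) hr0, e]
    calc x ^ 2 ≤ 1 + δ + 5 * r / 2 + r ^ 2 := hxU
      _ ≤ (1 + (δ + 15 * r)) * (1 - r) ^ 2 := hmid
      _ ≤ (1 + (δ + 15 * r)) * y ^ 2 := mul_le_mul_of_nonneg_left hyL h15pos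

/-- Transfer of the restricted isometry property between close sets: if every `a ∈ A`
admits `t > 0` and `b ∈ B` with `‖b‖ > 0` such that `‖t•a - b/‖b‖‖_{w,∞} ≤ r` (the
scale-invariant distance of `A` to `B` is at most `r`), `δ ≤ 1/2`, `r ≤ 1/4`, and
`RIP_B(δ)` holds, then `RIP_A(δ + 15r)` holds; if moreover `r ≤ δ/15` then
`RIP_A(2δ)` holds. -/
theorem rip_transfer_close_sets
    {V : Type*} [NormedAddCommGroup V] [NormedSpace ℝ V]
    (Nn Nw : Seminorm ℝ V)
    (hdom : ∀ v : V, ‖v‖ ≤ Nw v) (hdomn : ∀ v : V, Nn v ≤ Nw v)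
    (δ r : ℝ) (hδ0 : 0 ≤ δ) (hδ : δ ≤ 1 / 2) (hr0 : 0 ≤ r) (hr : r ≤ 1 / 4)
    (A B : Set V)
    (hdist : ∀ a ∈ A, ∃ t : ℝ, 0 < t ∧ ∃ b ∈ B, 0 < ‖b‖ ∧
      Nw (t • a - ‖b‖⁻¹ • b) ≤ r)
    (hripB : ∀ u ∈ B, (1 - δ) * ‖u‖ ^ 2 ≤ Nn u ^ 2 ∧ Nn u ^ 2 ≤ (1 + δ) * ‖u‖ ^ 2) :
    (∀ u ∈ A, (1 - (δ + 15 * r)) * ‖u‖ ^ 2 ≤ Nn u ^ 2 ∧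
      Nn u ^ 2 ≤ (1 + (δ + 15 * r)) * ‖u‖ ^ 2) ∧
    (r ≤ δ / 15 →
      ∀ u ∈ A, (1 - 2 * δ) * ‖u‖ ^ 2 ≤ Nn u ^ 2 ∧
        Nn u ^ 2 ≤ (1 + 2 * δ) * ‖u‖ ^ 2) := by
  have hmain : ∀ u ∈ A, (1 - (δ + 15 * r)) * ‖u‖ ^ 2 ≤ Nn u ^ 2 ∧
      Nn u ^ 2 ≤ (1 + (δ + 15 * r)) * ‖u‖ ^ 2 := by
    intro a ha
    obtain ⟨t, ht, b, hb, hbn, hclose⟩ := hdist a ha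
    set c : V := ‖b‖⁻¹ • b with hc
    have hcnorm : ‖c‖ = 1 := by
      rw [hc, norm_smul, norm_inv, norm_norm]
      field_simp
    obtain ⟨h1, h2⟩ := hripB b hb
    have hNc : Nn c = ‖b‖⁻¹ * Nn b := by
      rw [hc, map_smul_eq_mul, Real.norm_eq_abs, abs_inv, abs_norm]
    have hbinv : (0:ℝ) < ‖b‖⁻¹ := inv_pos.mpr hbn
    have hb2 : ‖b‖⁻¹ * ‖b‖⁻¹ * ‖b‖ ^ 2 = 1 := by
      field_simp
    have hinv2 : (0:ℝ) ≤ ‖b‖⁻¹ * ‖b‖⁻¹ := le_of_lt (mul_pos hbinv hbinv)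
    have hz1 : (1 - δ) ≤ Nn c ^ 2 := by
      rw [hNc]
      calc 1 - δ = (1 - δ) * (‖b‖⁻¹ * ‖b‖⁻¹ * ‖b‖ ^ 2) := by rw [hb2]; ring
        _ = ‖b‖⁻¹ * ‖b‖⁻¹ * ((1 - δ) * ‖b‖ ^ 2) := by ring
        _ ≤ ‖b‖⁻¹ * ‖b‖⁻¹ * Nn b ^ 2 := mul_le_mul_of_nonneg_left h1 hinv2
        _ = (‖b‖⁻¹ * Nn b) ^ 2 := by ring
    have hz2 : Nn c ^ 2 ≤ (1 + δ) := by
      rw [hNc]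
      calc (‖b‖⁻¹ * Nn b) ^ 2 = ‖b‖⁻¹ * ‖b‖⁻¹ * Nn b ^ 2 := by ring
        _ ≤ ‖b‖⁻¹ * ‖b‖⁻¹ * ((1 + δ) * ‖b‖ ^ 2) := mul_le_mul_of_nonneg_left h2 hinv2
        _ = (1 + δ) * (‖b‖⁻¹ * ‖b‖⁻¹ * ‖b‖ ^ 2) := by ring
        _ = 1 + δ := by rw [hb2]; ring
    have hxz : |Nn (t • a) - Nn c| ≤ r := by
      calc |Nn (t • a) - Nn c| ≤ Nn (t • a - c) := Nn.norm_sub_map_le_sub _ _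
        _ ≤ Nw (t • a - c) := hdomn _
        _ ≤ r := hclose
    have hy1 : |‖t • a‖ - 1| ≤ r := by
      have h1' : |‖t • a‖ - ‖c‖| ≤ ‖t • a - c‖ := abs_norm_sub_norm_le _ _
      rw [hcnorm] at h1'
      calc |‖t • a‖ - 1| ≤ ‖t • a - c‖ := h1'
        _ ≤ Nw (t • a - c) := hdom _
        _ ≤ r := hclose
    rw [abs_le] at hxz hy1
    obtain ⟨hlower, hupper⟩ := rip_transfer_scalar δ r (Nn (t • a)) ‖t • a‖ (Nn c)
      hδ0 hδ hr0 hr (apply_nonneg _ _) (norm_nonneg _) (apply_nonneg _ _)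
      hz1 hz2 hxz.1 hxz.2 hy1.1 hy1.2
    have hxa : Nn (t • a) = t * Nn a := by
      rw [map_smul_eq_mul, Real.norm_eq_abs, abs_of_pos ht]
    have hya : ‖t • a‖ = t * ‖a‖ := by
      rw [norm_smul, Real.norm_eq_abs, abs_of_pos ht]
    rw [hxa, hya] at hupper hlower
    have ht2 : (0:ℝ) < t ^ 2 := pow_pos ht 2
    constructor
    · have h' : t ^ 2 * ((1 - (δ + 15 * r)) * ‖a‖ ^ 2) ≤ t ^ 2 * Nn a ^ 2 := by
        calc t ^ 2 * ((1 - (δ + 15 * r)) * ‖a‖ ^ 2)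
            = (1 - (δ + 15 * r)) * (t * ‖a‖) ^ 2 := by ring
          _ ≤ (t * Nn a) ^ 2 := hlower
          _ = t ^ 2 * Nn a ^ 2 := by ring
      exact le_of_mul_le_mul_left h' ht2
    · have h' : t ^ 2 * Nn a ^ 2 ≤ t ^ 2 * ((1 + (δ + 15 * r)) * ‖a‖ ^ 2) := by
        calc t ^ 2 * Nn a ^ 2 = (t * Nn a) ^ 2 := by ring
          _ ≤ (1 + (δ + 15 * r)) * (t * ‖a‖) ^ 2 := hupper
          _ = t ^ 2 * ((1 + (δ + 15 * r)) * ‖a‖ ^ 2) := by ring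
      exact le_of_mul_le_mul_left h' ht2
  refine ⟨hmain, fun hrδ u hu => ?_⟩
  obtain ⟨h1, h2⟩ := hmain u hu
  constructor
  · nlinarith [sq_nonneg ‖u‖]
  · nlinarith [sq_nonneg ‖u‖]
end

section
/- Let M ≥ 1 and R ≥ 1 be natural numbers, let d : Fin M → ℕ assign a dimension to each mode, and let A : (∏_{m∈Fin M} Fin (d m)) → ℝ be a tensor with at most R nonzero entries. Then there exist component tensors G, where for each m ∈ Fin M and each i ∈ Fin (d m), G m i is an R×R real matrix, such that for every multi-index i one has A(i) = ( G 0 (i 0) · G 1 (i 1) · ⋯ · G (M−1) (i (M−1)) )_{0,0}, i.e. A admits a tensor train representation with all ranks bounded by R. Moreover, the components can be chosen so that for each mode m the total number of nonzero entries of the family (G m i)_{i ∈ Fin (d m)} is at most R. -/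
/-!
Enumerate the support of `A` by states `k : Fin R`, so that `A = ∑ k, c k • δ_{w k}`. With
`M ≥ 2` modes, state `k` is a path that leaves the boundary state `0` in the first core with
weight `c k`, stays put along diagonal cores, and returns to `0` in the last core; each core lets
state `k` through at mode `m` only on the index `w k m`, so the `(0, 0)` entry of the product is
`∑ k, c k · [w k = i]`, and every core has at most one nonzero entry per state. With a single
mode the whole sum sits in the `(0, 0)` entry of the only core.
-/

open Matrix

theorem Set.ncard_le_of_subset_range {β K : Type*} [Finite K] {s : Set β} (f : K → β)
    (h : s ⊆ Set.range f) : s.ncard ≤ Nat.card K :=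
  (Set.ncard_le_ncard h (Set.finite_range f)).trans <| by
    rw [← Set.image_univ, ← Set.ncard_univ]
    exact Set.ncard_image_le

theorem Function.Embedding.sum_extend_zero {α β M : Type*} [Fintype α] [Fintype β]
    [AddCommMonoid M] (e : α ↪ β) (f : α → M) :
    ∑ b, Function.extend e f 0 b = ∑ a, f a := by
  classical
  calc ∑ b, Function.extend e f 0 b = ∑ b ∈ Finset.univ.map e, Function.extend e f 0 b :=
        (Finset.sum_subset (Finset.subset_univ _) fun b _ hb => Function.extend_apply' (f := e)
          _ _ _ fun ⟨a, ha⟩ => hb (Finset.mem_map.2 ⟨a, Finset.mem_univ a, ha⟩)).symm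
    _ = ∑ a, f a := by simp [e.injective.extend_apply]

theorem exists_eq_sum_single_of_ncard_support_le {ι β : Type*} [Finite ι] [Nonempty ι]
    [DecidableEq ι] [AddCommMonoid β] {R : ℕ} (A : ι → β)
    (hA : (Function.support A).ncard ≤ R) :
    ∃ (w : Fin R → ι) (c : Fin R → β), A = ∑ k, Pi.single (w k) (c k) := by
  classical
  have : Fintype ι := Fintype.ofFinite ι
  obtain ⟨e⟩ := Function.Embedding.nonempty_of_card_le (α := Function.support A) (β := Fin R)
    (by rwa [← Nat.card_eq_fintype_card, Nat.card_coe_set_eq, Fintype.card_fin])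
  refine ⟨Function.extend e Subtype.val (fun _ => Classical.arbitrary ι),
    Function.extend e (A ∘ Subtype.val) 0, ?_⟩
  calc A = ∑ j : Function.support A, Pi.single ↑j (A j) := by
        conv_lhs => rw [← Finset.univ_sum_single A,
          ← Fintype.sum_subtype_add_sum_subtype (· ∈ Function.support A)]
        rw [Fintype.sum_eq_zero _ fun j : {x // x ∉ Function.support A} => by
          rw [Function.notMem_support.1 j.2, Pi.single_zero], add_zero]
    _ = ∑ k, Function.extend e (fun j => Pi.single ↑j (A j)) 0 k := (e.sum_extend_zero _).symm
    _ = _ := Finset.sum_congr rfl fun k _ => by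
        by_cases hk : ∃ j, e j = k
        · obtain ⟨j, rfl⟩ := hk
          simp [e.injective.extend_apply]
        · simp [Function.extend_apply' _ _ _ hk]

section TensorTrain

variable {K α : Type*} [Fintype K] [DecidableEq K] [CommSemiring α]

theorem Matrix.list_prod_ofFn_diagonal {n : ℕ} (g : Fin n → K → α) :
    (List.ofFn fun j => diagonal (g j)).prod = diagonal (∏ j, g j) := by
  rw [← List.prod_ofFn, ← diagonalRingHom_apply, map_list_prod, List.map_ofFn]
  rfl

theorem Matrix.vecMulVec_mul_diagonal_mul_vecMulVec_apply (u a δ b v : K → α) (r l : K) :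
    (vecMulVec u a * diagonal δ * vecMulVec b v) r l = u r * (∑ k, a k * δ k * b k) * v l := by
  rw [mul_apply, Finset.mul_sum, Finset.sum_mul]
  refine Finset.sum_congr rfl fun k _ => ?_
  rw [mul_diagonal, vecMulVec_apply, vecMulVec_apply]
  ring

noncomputable def sumCores {X : Fin 1 → Type*} (z : K) (w : K → ∀ m, X m) (c : K → α) :
    ∀ m, X m → Matrix K K α :=
  fun m x => single z z (∑ k, {k | w k m = x}.indicator c k)

theorem sumCores_prod_apply {X : Fin 1 → Type*} [∀ m, DecidableEq (X m)] (z : K)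
    (w : K → ∀ m, X m) (c : K → α) (i : ∀ m, X m) :
    (List.ofFn fun m => sumCores z w c m (i m)).prod z z
      = (∑ k, Pi.single (w k) (c k) : (∀ m, X m) → α) i := by
  classical
  rw [List.ofFn_succ, List.ofFn_zero, List.prod_cons, List.prod_nil, mul_one]
  simp [sumCores, Finset.sum_apply, Pi.single_apply, Set.indicator_apply, funext_iff, eq_comm]

theorem ncard_sumCores_ne_zero_le {X : Fin 1 → Type*} (z : K) (w : K → ∀ m, X m) (c : K → α)
    (m : Fin 1) :
    {p : X m × K × K | sumCores z w c m p.1 p.2.1 p.2.2 ≠ 0}.ncard ≤ Nat.card K := by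
  refine Set.ncard_le_of_subset_range (fun k => (w k m, z, z)) ?_
  rintro ⟨x, r, l⟩ (hp : single z z _ r l ≠ 0)
  obtain ⟨rfl, rfl⟩ : z = r ∧ z = l := of_not_not fun h => hp (single_apply_of_ne _ _ _ _ _ h)
  obtain ⟨k, -, hk⟩ := Finset.exists_ne_zero_of_sum_ne_zero (by rwa [single_apply_same] at hp)
  obtain ⟨rfl, -⟩ := Set.indicator_apply_ne_zero.1 hk
  exact ⟨k, rfl⟩

noncomputable def pathCores {n : ℕ} {X : Fin (n + 2) → Type*} (z : K) (w : K → ∀ m, X m)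
    (c : K → α) : ∀ m, X m → Matrix K K α :=
  Fin.cons (fun x => vecMulVec (Pi.single z 1) ({k | w k 0 = x}.indicator c))
    (Fin.snoc (α := fun j => X j.succ → Matrix K K α)
      (fun j x => diagonal ({k | w k j.castSucc.succ = x}.indicator 1))
      (fun x => vecMulVec ({k | w k (Fin.last n).succ = x}.indicator 1) (Pi.single z 1)))

theorem pathCores_prod_apply {n : ℕ} {X : Fin (n + 2) → Type*} [∀ m, DecidableEq (X m)]
    (z : K) (w : K → ∀ m, X m) (c : K → α) (i : ∀ m, X m) :
    (List.ofFn fun m => pathCores z w c m (i m)).prod z z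
      = (∑ k, Pi.single (w k) (c k) : (∀ m, X m) → α) i := by
  classical
  rw [List.ofFn_succ, List.ofFn_succ', List.prod_cons, List.concat_eq_append, List.prod_append,
    List.prod_singleton]
  simp only [pathCores, Fin.cons_zero, Fin.cons_succ, Fin.snoc_castSucc, Fin.snoc_last]
  rw [list_prod_ofFn_diagonal, ← mul_assoc, vecMulVec_mul_diagonal_mul_vecMulVec_apply,
    Finset.sum_apply]
  simp only [Pi.single_eq_same, one_mul, mul_one]
  refine Finset.sum_congr rfl fun k _ => ?_
  -- Conjuncts in the order in which the product nests the three indicator conditions.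
  have hmatch : i = w k ↔ w k (Fin.last n).succ = i (Fin.last n).succ ∧
      (∀ j : Fin n, w k j.castSucc.succ = i j.castSucc.succ) ∧ w k 0 = i 0 := by
    rw [eq_comm, funext_iff, Fin.forall_fin_succ, Fin.forall_fin_succ']
    tauto
  simp [Pi.single_apply, Set.indicator_apply, Finset.prod_apply, Fintype.prod_boole, hmatch,
    ite_and]

theorem ncard_pathCores_ne_zero_le {n : ℕ} {X : Fin (n + 2) → Type*} (z : K)
    (w : K → ∀ m, X m) (c : K → α) (m : Fin (n + 2)) :
    {p : X m × K × K | pathCores z w c m p.1 p.2.1 p.2.2 ≠ 0}.ncard ≤ Nat.card K := by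
  induction m using Fin.cases with
  | zero =>
    refine Set.ncard_le_of_subset_range (fun k => (w k 0, z, k)) ?_
    rintro ⟨x, r, l⟩ (hp : pathCores z w c 0 x r l ≠ 0)
    rw [pathCores, Fin.cons_zero, vecMulVec_apply] at hp
    obtain rfl : r = z := of_not_not fun h => left_ne_zero_of_mul hp (Pi.single_eq_of_ne h 1)
    obtain ⟨rfl, -⟩ := Set.indicator_apply_ne_zero.1 (right_ne_zero_of_mul hp)
    exact ⟨l, rfl⟩
  | succ j =>
    induction j using Fin.lastCases with
    | last =>
      refine Set.ncard_le_of_subset_range (fun k => (w k (Fin.last n).succ, k, z)) ?_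
      rintro ⟨x, r, l⟩ (hp : pathCores z w c (Fin.last n).succ x r l ≠ 0)
      rw [pathCores, Fin.cons_succ, Fin.snoc_last, vecMulVec_apply] at hp
      obtain rfl : l = z := of_not_not fun h => right_ne_zero_of_mul hp (Pi.single_eq_of_ne h 1)
      obtain ⟨rfl, -⟩ := Set.indicator_apply_ne_zero.1 (left_ne_zero_of_mul hp)
      exact ⟨r, rfl⟩
    | cast j =>
      refine Set.ncard_le_of_subset_range (fun k => (w k j.castSucc.succ, k, k)) ?_
      rintro ⟨x, r, l⟩ (hp : pathCores z w c j.castSucc.succ x r l ≠ 0)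
      rw [pathCores, Fin.cons_succ, Fin.snoc_castSucc] at hp
      obtain rfl : r = l := of_not_not fun h => hp (diagonal_apply_ne _ h)
      obtain ⟨rfl, -⟩ := Set.indicator_apply_ne_zero.1 (by rwa [diagonal_apply_eq] at hp)
      exact ⟨r, rfl⟩

end TensorTrain

/-- Every tensor with at most `R` nonzero entries admits a tensor train representation
with all ranks bounded by `R` (realised by `R×R` component matrices and the `(0,0)`
entry of their ordered product), whose component families are themselves `R`-sparse in
each mode. -/
theorem sparse_tensor_train_representation
    (M R : ℕ) (hM : 0 < M) (hR : 0 < R)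
    (d : Fin M → ℕ)
    (A : (∀ m : Fin M, Fin (d m)) → ℝ)
    (hA : {i : ∀ m : Fin M, Fin (d m) | A i ≠ 0}.ncard ≤ R) :
    ∃ G : ∀ m : Fin M, Fin (d m) → Matrix (Fin R) (Fin R) ℝ,
      (∀ i : ∀ m : Fin M, Fin (d m),
        A i = (List.ofFn fun m : Fin M => G m (i m)).prod ⟨0, hR⟩ ⟨0, hR⟩) ∧
      (∀ m : Fin M,
        {p : Fin (d m) × Fin R × Fin R | G m p.1 p.2.1 p.2.2 ≠ 0}.ncard ≤ R) := by
  rcases isEmpty_or_nonempty (∀ m : Fin M, Fin (d m)) with hι | hι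
  · exact ⟨0, isEmptyElim, fun m => by simp⟩
  obtain ⟨w, c, rfl⟩ := exists_eq_sum_single_of_ncard_support_le A hA
  obtain ⟨n, rfl⟩ := Nat.exists_eq_add_one_of_ne_zero hM.ne'
  rcases n with _ | n
  · refine ⟨sumCores ⟨0, hR⟩ w c, fun i => (sumCores_prod_apply _ w c i).symm, fun m => ?_⟩
    simpa using ncard_sumCores_ne_zero_le ⟨0, hR⟩ w c m
  · refine ⟨pathCores ⟨0, hR⟩ w c, fun i => (pathCores_prod_apply _ w c i).symm, fun m => ?_⟩
    simpa using ncard_pathCores_ne_zero_le ⟨0, hR⟩ w c m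
end
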